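/- arXiv:1002.1749 — 8 statements merged into one kernel-verified Lean document; each statement's English description precedes it below -/
import Mathlib

section
/- Let Φ be a property of finite subsets (a subset of 𝒢) with ∅ ∉ Φ. Then ≡^Φ = ≡^Φₛ if and only if there exists a set X ⊆ ℰ such that Φ = {G ∈ 𝒢 : G ∩ X ≠ ∅}. -/
/-- For a property `Φ` of finite sets with `∅ ∉ Φ`, the relation `≡^Φ` equals its
strengthening iff `Φ = {G | G ∩ X ≠ ∅}` for some `X ⊆ ℰ`. -/
theorem stmt7 {E : Type} [Countable E] [Infinite E] [DecidableEq E]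
    (Φ : Set (Finset E)) (h0 : ∅ ∉ Φ) :
    (∀ G H : Finset E,
        (G ∈ Φ ↔ H ∈ Φ) ↔ (∀ F : Finset E, (G ∪ F ∈ Φ ↔ H ∪ F ∈ Φ))) ↔
      ∃ X : Set E, Φ = {G : Finset E | ∃ x ∈ X, x ∈ G} := by
  constructor
  · intro h
    refine ⟨{x | ({x} : Finset E) ∈ Φ}, ?_⟩
    -- monotonicity
    have mono : ∀ s t : Finset E, s ∈ Φ → s ⊆ t → t ∈ Φ := by
      intro s t hs hst
      by_contra ht
      have h1 : (t ∈ Φ ↔ (∅ : Finset E) ∈ Φ) := by simp [ht, h0]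
      have h2 := ((h t ∅).mp h1) s
      simp only [Finset.empty_union] at h2
      rw [Finset.union_eq_left.mpr hst] at h2
      exact ht (h2.mpr hs)
    -- sets with no singleton in Φ are not in Φ
    have nosing : ∀ G : Finset E, (∀ x ∈ G, ({x} : Finset E) ∉ Φ) → G ∉ Φ := by
      intro G
      induction G using Finset.induction_on with
      | empty => intro _; exact h0
      | @insert a s ha ih =>
        intro hx
        have hsa : ({a} : Finset E) ∉ Φ := hx a (Finset.mem_insert_self a s)
        have h1 : (({a} : Finset E) ∈ Φ ↔ (∅ : Finset E) ∈ Φ) := by simp [hsa, h0]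
        have h2 := ((h {a} ∅).mp h1) s
        simp only [Finset.empty_union] at h2
        have hins : ({a} : Finset E) ∪ s = insert a s := by
          ext y; simp [Finset.mem_insert]
        rw [hins] at h2
        have hs' : s ∉ Φ := ih (fun x hxs => hx x (Finset.mem_insert_of_mem hxs))
        intro hG
        exact hs' (h2.mp hG)
    ext G
    constructor
    · intro hG
      by_contra hc
      simp only [Set.mem_setOf_eq] at hc
      push_neg at hc
      exact nosing G (fun x hx hΦ => hc x hΦ hx) hG
    · rintro ⟨x, hxΦ, hxG⟩
      exact mono {x} G hxΦ (Finset.singleton_subset_iff.mpr hxG)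
  · rintro ⟨X, rfl⟩ G H
    constructor
    · intro hGH F
      simp only [Set.mem_setOf_eq, Finset.mem_union] at *
      constructor
      · rintro ⟨x, hxX, hx | hx⟩
        · obtain ⟨y, hyX, hyH⟩ := hGH.mp ⟨x, hxX, hx⟩
          exact ⟨y, hyX, Or.inl hyH⟩
        · exact ⟨x, hxX, Or.inr hx⟩
      · rintro ⟨x, hxX, hx | hx⟩
        · obtain ⟨y, hyX, hyG⟩ := hGH.mpr ⟨x, hxX, hx⟩
          exact ⟨y, hyX, Or.inl hyG⟩
        · exact ⟨x, hxX, Or.inr hx⟩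
    · intro hF
      have := hF ∅
      simpa using this
end

section
/- Let Φ be a property of finite subsets of a countably infinite set ℰ. Then ≡^Φ = ≡^Φₛ if and only if there exists X ⊆ ℰ such that Φ = {G ∈ 𝒢 : G ∩ X ≠ ∅} or Φ = {G ∈ 𝒢 : G ⊆ X}. -/
/-- `≡^Φ` equals its strengthening iff `Φ = {G | G ∩ X ≠ ∅}` or
`Φ = {G | G ⊆ X}` for some `X ⊆ ℰ`. -/
theorem stmt8 {E : Type} [Countable E] [Infinite E] [DecidableEq E]
    (Φ : Set (Finset E)) :
    (∀ G H : Finset E,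
        (G ∈ Φ ↔ H ∈ Φ) ↔ (∀ F : Finset E, (G ∪ F ∈ Φ ↔ H ∪ F ∈ Φ))) ↔
      ∃ X : Set E, Φ = {G : Finset E | ∃ x ∈ X, x ∈ G} ∨
        Φ = {G : Finset E | (G : Set E) ⊆ X} := by
  constructor
  · intro h
    -- congruence facts
    have hc : ∀ G H F : Finset E, (G ∈ Φ ↔ H ∈ Φ) → (G ∪ F ∈ Φ ↔ H ∪ F ∈ Φ) :=
      fun G H F e => (h G H).mp e F
    have hc' : ∀ G H F : Finset E, (G ∈ Φ ↔ H ∈ Φ) → (F ∪ G ∈ Φ ↔ F ∪ H ∈ Φ) := by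
      intro G H F e
      rw [Finset.union_comm F G, Finset.union_comm F H]
      exact hc G H F e
    by_cases h0 : (∅ : Finset E) ∈ Φ
    · refine ⟨{x | ({x} : Finset E) ∈ Φ}, Or.inr ?_⟩
      have hand : ∀ G H : Finset E, G ∪ H ∈ Φ ↔ (G ∈ Φ ∧ H ∈ Φ) := by
        have left : ∀ G H : Finset E, G ∪ H ∈ Φ → G ∈ Φ := by
          intro G H hGH
          by_contra hG
          by_cases hH : H ∈ Φ
          · -- H ≡ ∅, so G ∪ H ≡ G ∪ ∅ = G
            have := hc' H ∅ G (by simp [hH, h0])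
            rw [Finset.union_empty] at this
            exact hG (this.mp hGH)
          · -- G ≡ H, so G = G ∪ G ≡ H ∪ G = G ∪ H
            have := hc G H G (by simp [hG, hH])
            rw [Finset.union_self, Finset.union_comm H G] at this
            exact hG (this.mpr hGH)
        intro G H
        constructor
        · intro hGH
          refine ⟨left G H hGH, left H G ?_⟩
          rwa [Finset.union_comm]
        · rintro ⟨hG, hH⟩
          have := hc G ∅ H (by simp [hG, h0])
          rw [Finset.empty_union] at this
          exact this.mpr hH
      ext G
      simp only [Set.mem_setOf_eq]
      induction G using Finset.induction_on with
      | empty => simp [h0]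
      | @insert a s ha ih =>
        have : insert a s = {a} ∪ s := by rw [Finset.insert_eq]
        rw [this, hand, ih]
        simp [Set.insert_subset_iff]
    · refine ⟨{x | ({x} : Finset E) ∈ Φ}, Or.inl ?_⟩
      have hor : ∀ G H : Finset E, G ∪ H ∈ Φ ↔ (G ∈ Φ ∨ H ∈ Φ) := by
        have left : ∀ G H : Finset E, G ∈ Φ → G ∪ H ∈ Φ := by
          intro G H hG
          by_contra hGH
          by_cases hH : H ∈ Φ
          · -- G ≡ H, so G = G ∪ G ≡ H ∪ G = G ∪ H
            have := hc G H G (by simp [hG, hH])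
            rw [Finset.union_self, Finset.union_comm H G] at this
            exact hGH (this.mp hG)
          · -- H ≡ ∅, so G ∪ H ≡ G ∪ ∅ = G
            have := hc' H ∅ G (by simp [hH, h0])
            rw [Finset.union_empty] at this
            exact hGH (this.mpr hG)
        intro G H
        constructor
        · intro hGH
          by_contra hcon
          push_neg at hcon
          obtain ⟨hG, hH⟩ := hcon
          have := hc G ∅ H (by simp [hG, h0])
          rw [Finset.empty_union] at this
          exact hH (this.mp hGH)
        · rintro (hG | hH)
          · exact left G H hG
          · rw [Finset.union_comm]; exact left H G hH
      ext G
      simp only [Set.mem_setOf_eq]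
      induction G using Finset.induction_on with
      | empty => simp [h0]
      | @insert a s ha ih =>
        have : insert a s = {a} ∪ s := by rw [Finset.insert_eq]
        rw [this, hor, ih]
        simp only [Set.mem_setOf_eq, Finset.mem_union, Finset.mem_singleton]
        constructor
        · rintro (hA | ⟨x, hx, hxs⟩)
          · exact ⟨a, hA, Or.inl rfl⟩
          · exact ⟨x, hx, Or.inr hxs⟩
        · rintro ⟨x, hx, rfl | hxs⟩
          · exact Or.inl hx
          · exact Or.inr ⟨x, hx, hxs⟩
  · rintro ⟨X, rfl | rfl⟩ <;> intro G H <;> constructor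
    · intro e F
      simp only [Set.mem_setOf_eq, Finset.mem_union] at *
      constructor
      · rintro ⟨x, hx, hG | hF⟩
        · obtain ⟨y, hy, hyH⟩ := e.mp ⟨x, hx, hG⟩
          exact ⟨y, hy, Or.inl hyH⟩
        · exact ⟨x, hx, Or.inr hF⟩
      · rintro ⟨x, hx, hH | hF⟩
        · obtain ⟨y, hy, hyG⟩ := e.mpr ⟨x, hx, hH⟩
          exact ⟨y, hy, Or.inl hyG⟩
        · exact ⟨x, hx, Or.inr hF⟩
    · intro hall
      have := hall ∅
      simpa using this
    · intro e F
      simp only [Set.mem_setOf_eq, Finset.coe_union, Set.union_subset_iff] at *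
      tauto
    · intro hall
      have := hall ∅
      simpa using this
end

section
/- Let ≡ be an equivalence relation on the set 𝒢 of graphs (finite sets of edges over a countably infinite vertex set 𝒱). Then ≡ₛ is the identity relation on 𝒢 if and only if for every finite complete graph K ∈ 𝒢 and every edge e ∈ K, K ≢ₛ K − e. -/
/-- Graphs are finite sets of edges, an edge being a 2-element subset of the
vertex type `V`. -/
abbrev EGraph (V : Type) [DecidableEq V] := Finset {e : Finset V // e.card = 2}

/-- The vertex set of a graph: all endpoints of its edges (no isolated vertices). -/
def EGraph.verts {V : Type} [DecidableEq V] (G : EGraph V) : Finset V :=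
  G.sup (fun e => e.1)

/-- The simple graph on `V` determined by a finite edge set. -/
def EGraph.toSG {V : Type} [DecidableEq V] (G : EGraph V) : SimpleGraph V :=
  SimpleGraph.fromRel (fun u v => ∃ e ∈ G, e.1 = ({u, v} : Finset V))

lemma stmt10_aux {V : Type} [DecidableEq V]
    (r : EGraph V → EGraph V → Prop)
    (hcomp : ∀ K : EGraph V,
        (∃ S : Finset V, 2 ≤ S.card ∧ ∀ e, e ∈ K ↔ e.1 ⊆ S) →
        ∀ e ∈ K, ¬ (∀ F : EGraph V, r (K ∪ F) ((K.erase e) ∪ F)))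
    (G H : EGraph V) (hGH : ∀ F, r (G ∪ F) (H ∪ F))
    (e : {e : Finset V // e.card = 2}) (heG : e ∈ G) (heH : e ∉ H) : False := by
  set S : Finset V := G.verts ∪ H.verts with hS
  set K : EGraph V := (S.powersetCard 2).subtype (fun t => t.card = 2) with hK
  have hmemK : ∀ f : {e : Finset V // e.card = 2}, f ∈ K ↔ f.1 ⊆ S := by
    intro f
    rw [hK, Finset.mem_subtype, Finset.mem_powersetCard]
    exact ⟨fun h => h.1, fun h => ⟨h, f.2⟩⟩
  have hGK : ∀ f ∈ G, f ∈ K := by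
    intro f hf
    rw [hmemK]
    exact subset_trans (Finset.le_sup hf) Finset.subset_union_left
  have hHK : ∀ f ∈ H, f ∈ K.erase e := by
    intro f hf
    refine Finset.mem_erase.mpr ⟨fun h => heH (h ▸ hf), ?_⟩
    rw [hmemK]
    exact subset_trans (Finset.le_sup hf) Finset.subset_union_right
  have heK : e ∈ K := hGK e heG
  have hScard : 2 ≤ S.card := by
    calc 2 = e.1.card := e.2.symm
    _ ≤ S.card := Finset.card_le_card ((hmemK e).mp heK)
  have h1 : G ∪ K.erase e = K := by
    ext f
    constructor
    · intro hf
      rcases Finset.mem_union.mp hf with h | h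
      · exact hGK f h
      · exact Finset.mem_of_mem_erase h
    · intro hf
      by_cases hfe : f = e
      · exact Finset.mem_union_left _ (hfe ▸ heG)
      · exact Finset.mem_union_right _ (Finset.mem_erase.mpr ⟨hfe, hf⟩)
  have h2 : H ∪ K.erase e = K.erase e := Finset.union_eq_right.mpr hHK
  refine hcomp K ⟨S, hScard, hmemK⟩ e heK (fun F => ?_)
  have := hGH (K.erase e ∪ F)
  rwa [← Finset.union_assoc, ← Finset.union_assoc, h1, h2] at this

/-- The strengthening of an equivalence relation on graphs is the identity iff
for every finite complete graph `K` and every edge `e ∈ K`, `K ≢ₛ K − e`. -/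
theorem stmt10 {V : Type} [Countable V] [Infinite V] [DecidableEq V]
    (r : EGraph V → EGraph V → Prop) (hr : Equivalence r) :
    (∀ G H : EGraph V, (∀ F : EGraph V, r (G ∪ F) (H ∪ F)) ↔ G = H) ↔
      (∀ K : EGraph V,
        (∃ S : Finset V, 2 ≤ S.card ∧ ∀ e, e ∈ K ↔ e.1 ⊆ S) →
        ∀ e ∈ K, ¬ (∀ F : EGraph V, r (K ∪ F) ((K.erase e) ∪ F))) := by
  constructor
  · intro hid K _ e he hKe
    have h := (hid K (K.erase e)).mp hKe
    exact Finset.notMem_erase e K (h ▸ he)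
  · intro hcomp G H
    constructor
    · intro hGH
      by_contra hne
      have : ∃ f, (f ∈ G ∧ f ∉ H) ∨ (f ∈ H ∧ f ∉ G) := by
        by_contra hall
        push_neg at hall
        exact hne (Finset.ext fun f => ⟨fun h => (hall f).1 h, fun h => (hall f).2 h⟩)
      obtain ⟨f, ⟨h1, h2⟩ | ⟨h1, h2⟩⟩ := this
      · exact stmt10_aux r hcomp G H hGH f h1 h2
      · exact stmt10_aux r hcomp H G (fun F => hr.symm (hGH F)) f h1 h2
    · rintro rfl
      exact fun F => hr.refl _
end

section
/- Let ≡ be an equivalence relation on the collection 𝒢 of finite subsets of a countably infinite set ℰ. Then ≡ₛ is the identity relation on 𝒢 if and only if for every S ∈ 𝒢 and every e ∈ S, S ≢ₛ S − {e}. -/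
/-- For an equivalence relation on the finite subsets of a countably infinite
set, the strengthening is the identity iff for every finite set `S` and every
`e ∈ S`, `S ≢ₛ S − {e}`. -/
theorem stmt11 {E : Type} [Countable E] [Infinite E] [DecidableEq E]
    (r : Finset E → Finset E → Prop) (hr : Equivalence r) :
    (∀ G H : Finset E, (∀ F : Finset E, r (G ∪ F) (H ∪ F)) ↔ G = H) ↔
      (∀ S : Finset E, ∀ e ∈ S,
        ¬ (∀ F : Finset E, r (S ∪ F) ((S.erase e) ∪ F))) := by
  constructor
  · intro h S e he hall
    have := (h S (S.erase e)).mp hall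
    have : e ∉ S := by
      rw [this]; exact Finset.notMem_erase e S
    exact this he
  · intro h G H
    constructor
    · intro hall
      by_contra hne
      -- there is an element in the symmetric difference
      have key : ∀ G H : Finset E, (∀ F : Finset E, r (G ∪ F) (H ∪ F)) →
          ∀ e ∈ G, e ∉ H → False := by
        intro G H hall e heG heH
        apply h (G ∪ H) e (Finset.mem_union_left _ heG)
        intro F
        have h1 := hall ((G.erase e) ∪ H ∪ F)
        have e1 : G ∪ (G.erase e ∪ H ∪ F) = (G ∪ H) ∪ F := by
          ext x
          simp only [Finset.mem_union, Finset.mem_erase]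
          tauto
        have e2 : H ∪ (G.erase e ∪ H ∪ F) = ((G ∪ H).erase e) ∪ F := by
          ext x
          simp only [Finset.mem_union, Finset.mem_erase]
          constructor
          · rintro (hx | (⟨hne, hx⟩ | hx) | hx)
            · exact Or.inl ⟨fun hc => heH (hc ▸ hx), Or.inr hx⟩
            · exact Or.inl ⟨hne, Or.inl hx⟩
            · exact Or.inl ⟨fun hc => heH (hc ▸ hx), Or.inr hx⟩
            · exact Or.inr hx
          · rintro (⟨hne, hx | hx⟩ | hx)
            · exact Or.inr (Or.inl (Or.inl ⟨hne, hx⟩))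
            · exact Or.inl hx
            · exact Or.inr (Or.inr hx)
        rw [e1, e2] at h1
        exact h1
      rcases Finset.not_subset.mp (fun hc => hne (Finset.Subset.antisymm hc
        (fun x hx => by
          by_contra hxG
          exact key H G (fun F => hr.symm (hall F)) x hx hxG))) with ⟨e, heG, heH⟩
      exact key G H hall e heG heH
    · rintro rfl
      intro F
      exact hr.refl _
end

section
/- Two graphs are strongly equivalent with respect to hamiltonicity if and only if they are equal: G ≡^{hc}ₛ H iff G = H, where G ≡^{hc} H means that G and H either both have a hamiltonian cycle or both do not. -/
/-- A graph is hamiltonian if it contains a cycle passing through all of its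
vertices. -/
def EGraph.IsHamiltonian {V : Type} [DecidableEq V] (G : EGraph V) : Prop :=
  ∃ (v : V) (w : (EGraph.toSG G).Walk v v),
    w.IsCycle ∧ ∀ u ∈ EGraph.verts G, u ∈ w.support

/-! If an edge `ab` lies in `G` but not in `H`, let `S` be the vertex set of `G ∪ H` and let `F`
be a path from `b` to `a` through all of `S` in which every edge has an endpoint outside `S`.
Then `F` closed by `ab` is a hamiltonian cycle of `G ∪ F`. In a hamiltonian cycle of `H ∪ F`, a
vertex outside `S` has only its two `F`-edges, so the cycle contains the whole hamiltonian path
`F`, and its last edge must join the ends `a` and `b` of `F`; but `ab` lies neither in `H` nor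
in `F`. -/

namespace SimpleGraph

namespace Walk

variable {V : Type*} {G G' : SimpleGraph V}

theorem IsPath.ncard_neighborSet_toSubgraph_eq_two {u v x : V} {p : G.Walk u v}
    (hp : p.IsPath) (hx : x ∈ p.support) (hxu : x ≠ u) (hxv : x ≠ v) :
    (p.toSubgraph.neighborSet x).ncard = 2 := by
  obtain ⟨i, rfl, hi⟩ := mem_support_iff_exists_getVert.1 hx
  refine hp.ncard_neighborSet_toSubgraph_internal_eq_two ?_ ?_
  · rintro rfl
    exact hxu p.getVert_zero
  · exact hi.lt_of_ne (by rintro rfl; exact hxv p.getVert_length)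

theorem IsCycle.mem_edges_of_isPath {u a b : V} {w : G.Walk u u} (hw : w.IsCycle)
    {p : G'.Walk b a} (hp : p.IsPath) (hab : a ≠ b) (hpw : p.edges ⊆ w.edges)
    (hwp : w.support ⊆ p.support) : s(a, b) ∈ w.edges := by
  have hnil : ¬ p.Nil := not_nil_of_ne hab.symm
  have hpa := hp.neighborSet_toSubgraph_endpoint hnil
  have hsub : ∀ x, p.toSubgraph.neighborSet x ⊆ w.toSubgraph.neighborSet x := fun x y hy =>
    adj_toSubgraph_iff_mem_edges.2 (hpw (adj_toSubgraph_iff_mem_edges.1 hy))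
  have ha : a ∈ w.support := w.mem_verts_toSubgraph.1
    (w.toSubgraph.edge_vert (hsub a (p.toSubgraph_adj_penultimate hnil).symm))
  obtain ⟨y, hay, hy⟩ : ∃ y, w.toSubgraph.Adj a y ∧ y ≠ p.penultimate := by
    obtain ⟨y₁, y₂, hne, hy⟩ :=
      Set.ncard_eq_two.1 (hw.ncard_neighborSet_toSubgraph_eq_two ha)
    have hy₁ : y₁ ∈ w.toSubgraph.neighborSet a := by simp [hy]
    have hy₂ : y₂ ∈ w.toSubgraph.neighborSet a := by simp [hy]
    by_cases h₁ : y₁ = p.penultimate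
    · exact ⟨y₂, hy₂, fun h₂ => hne (h₁.trans h₂.symm)⟩
    · exact ⟨y₁, hy₁, h₁⟩
  by_contra hwab
  have hyb : y ≠ b := by
    rintro rfl
    exact hwab (adj_toSubgraph_iff_mem_edges.1 hay)
  have hyw : y ∈ w.support := w.mem_verts_toSubgraph.1 (w.toSubgraph.edge_vert hay.symm)
  -- `y` is an inner vertex of `p`, so both of its cycle edges lie on `p`, one of them towards `a`
  have hpy : p.toSubgraph.neighborSet y = w.toSubgraph.neighborSet y :=
    Set.eq_of_subset_of_ncard_le (hsub y)
      (by rw [hp.ncard_neighborSet_toSubgraph_eq_two (hwp hyw) hyb hay.ne.symm,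
        hw.ncard_neighborSet_toSubgraph_eq_two hyw]) w.finite_neighborSet_toSubgraph
  have hpay : y ∈ p.toSubgraph.neighborSet a :=
    Subgraph.Adj.symm (show a ∈ p.toSubgraph.neighborSet y from hpy ▸ hay.symm)
  exact hy (by rwa [hpa] at hpay)

end Walk

open Walk in
theorem exists_isPath_top_fresh {V : Type*} [Infinite V] (S : Finset V) {a : V} (ha : a ∈ S)
    {T : Finset V} (hTS : T ⊆ S) (haT : a ∉ T) {b : V} (hb : b ∈ S) (hba : b ≠ a)
    (hbT : b ∉ T) :
    ∃ p : (⊤ : SimpleGraph V).Walk b a, p.IsPath ∧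
      (∀ x ∈ S, x ∈ p.support ↔ x = b ∨ x = a ∨ x ∈ T) ∧
      ∀ e ∈ p.edges, ∃ x ∈ e, x ∉ S := by
  classical
  induction T using Finset.induction_on generalizing b with
  | empty =>
    obtain ⟨z, hz⟩ := Infinite.exists_notMem_finset S
    have hbz : b ≠ z := by rintro rfl; exact hz hb
    have hza : z ≠ a := by rintro rfl; exact hz ha
    refine ⟨cons (top_adj b z |>.2 hbz) (cons (top_adj z a |>.2 hza) nil), ?_, ?_, ?_⟩
    · simp [cons_isPath_iff, hbz, hba, hza]
    · intro x hx
      have : x ≠ z := by rintro rfl; exact hz hx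
      simp [this]
    · simp only [edges_cons, edges_nil, List.mem_cons, List.not_mem_nil]
      rintro e (rfl | rfl | h)
      exacts [⟨z, by simp, hz⟩, ⟨z, by simp, hz⟩, h.elim]
  | insert t T htT ih =>
    obtain ⟨q, hq, hqS, hqe⟩ := ih (Finset.insert_subset_iff.1 hTS).2
      (fun h => haT (Finset.mem_insert_of_mem h)) (hTS (Finset.mem_insert_self t T))
      (fun h => haT (h ▸ Finset.mem_insert_self t T)) htT
    obtain ⟨z, hz⟩ := Infinite.exists_notMem_finset (S ∪ q.support.toFinset)
    simp only [Finset.mem_union, List.mem_toFinset, not_or] at hz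
    have hbz : b ≠ z := by rintro rfl; exact hz.1 hb
    have hzt : z ≠ t := by rintro rfl; exact hz.2 q.start_mem_support
    have hbq : b ∉ q.support := by
      rw [hqS b hb]
      simp only [Finset.mem_insert, not_or] at hbT
      tauto
    refine ⟨cons (top_adj b z |>.2 hbz) (cons (top_adj z t |>.2 hzt) q), ?_, ?_, ?_⟩
    · simp [cons_isPath_iff, hq, hz.2, hbz, hbq]
    · intro x hx
      have : x ≠ z := by rintro rfl; exact hz.1 hx
      simp only [support_cons, List.mem_cons, this, hqS x hx, false_or, Finset.mem_insert]
      tauto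
    · simp only [edges_cons, List.mem_cons]
      rintro e (rfl | rfl | h)
      exacts [⟨z, by simp, hz.1⟩, ⟨z, by simp, hz.1⟩, hqe e h]

end SimpleGraph

namespace EGraph

variable {V : Type} [DecidableEq V]

open SimpleGraph Walk

theorem toSG_adj {X : EGraph V} {x y : V} : (toSG X).Adj x y ↔ ∃ e ∈ X, e.1 = {x, y} := by
  rw [toSG, fromRel_adj]
  constructor
  · rintro ⟨-, ⟨e, he, hxy⟩ | ⟨e, he, hyx⟩⟩
    · exact ⟨e, he, hxy⟩
    · exact ⟨e, he, hyx.trans (Finset.pair_comm y x)⟩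
  · rintro ⟨e, he, hxy⟩
    exact ⟨Finset.card_pair_eq_two_iff.1 (hxy ▸ e.2), Or.inl ⟨e, he, hxy⟩⟩

theorem toSG_union (X Y : EGraph V) : toSG (X ∪ Y) = toSG X ⊔ toSG Y := by
  ext x y
  simp only [sup_adj, toSG_adj, Finset.mem_union, or_and_right, exists_or]

theorem verts_union (X Y : EGraph V) : (X ∪ Y).verts = X.verts ∪ Y.verts :=
  Finset.sup_union

theorem mem_verts_iff {X : EGraph V} {x : V} : x ∈ X.verts ↔ ∃ y, (toSG X).Adj x y := by
  simp only [verts, Finset.mem_sup, toSG_adj]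
  constructor
  · rintro ⟨e, he, hx⟩
    obtain ⟨u, v, -, huv⟩ := Finset.card_eq_two.1 e.2
    rw [huv, Finset.mem_insert, Finset.mem_singleton] at hx
    rcases hx with rfl | rfl
    · exact ⟨v, e, he, huv⟩
    · exact ⟨u, e, he, huv.trans (Finset.pair_comm _ _)⟩
  · rintro ⟨y, e, he, hxy⟩
    exact ⟨e, he, hxy ▸ Finset.mem_insert_self x {y}⟩

def ofWalk {G : SimpleGraph V} {u v : V} (p : G.Walk u v) : EGraph V :=
  (p.edges.toFinset.image Sym2.toFinset).subtype (·.card = 2)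

theorem toSG_ofWalk_adj {G : SimpleGraph V} {u v x y : V} {p : G.Walk u v} :
    (toSG (ofWalk p)).Adj x y ↔ s(x, y) ∈ p.edges := by
  simp only [toSG_adj, ofWalk, Finset.mem_subtype, Finset.mem_image, List.mem_toFinset]
  constructor
  · rintro ⟨e, ⟨z, hz, hze⟩, hxy⟩
    convert hz using 1
    exact Sym2.ext fun w => by
      rw [← Sym2.mem_toFinset, ← Sym2.mem_toFinset (z := z), hze, hxy, Sym2.toFinset_mk_eq]
  · intro h
    have hxy : x ≠ y := G.ne_of_adj (p.edges_subset_edgeSet h)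
    exact ⟨⟨{x, y}, Finset.card_pair hxy⟩, ⟨_, h, Sym2.toFinset_mk_eq⟩, rfl⟩

theorem mem_verts_of_mem_support {X : EGraph V} {u v x : V} {w : (toSG X).Walk u v}
    (hw : ¬ w.Nil) (hx : x ∈ w.support) : x ∈ X.verts := by
  obtain ⟨e, he, hxe⟩ := (mem_support_iff_exists_mem_edges_of_not_nil hw).1 hx
  obtain ⟨y, rfl⟩ := Sym2.mem_iff_exists.1 hxe
  exact mem_verts_iff.2 ⟨y, w.adj_of_mem_edges he⟩

theorem mem_verts_ofWalk {G : SimpleGraph V} {u v x : V} {p : G.Walk u v} (hp : ¬ p.Nil) :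
    x ∈ (ofWalk p).verts ↔ x ∈ p.support := by
  simp only [mem_verts_iff, toSG_ofWalk_adj]
  refine ⟨fun ⟨y, hxy⟩ => p.fst_mem_support_of_mem_edges hxy, fun hx => ?_⟩
  obtain ⟨e, he, hxe⟩ := (mem_support_iff_exists_mem_edges_of_not_nil hp).1 hx
  obtain ⟨y, rfl⟩ := Sym2.mem_iff_exists.1 hxe
  exact ⟨y, he⟩

section FreshPath

variable {X : EGraph V} {S : Finset V} {a b : V} {p : (⊤ : SimpleGraph V).Walk b a}

theorem isHamiltonian_union_ofWalk (hp : p.IsPath) (hXS : X.verts ⊆ S)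
    (hSp : ∀ x ∈ S, x ∈ p.support) (hfresh : ∀ e ∈ p.edges, ∃ x ∈ e, x ∉ S)
    (hab : (toSG X).Adj a b) : (X ∪ ofWalk p).IsHamiltonian := by
  have hpF : ∀ e ∈ p.edges, e ∈ (toSG (X ∪ ofWalk p)).edgeSet := by
    intro e he
    induction e using Sym2.ind with
    | h x y => rw [SimpleGraph.mem_edgeSet, toSG_union]; exact Or.inr (toSG_ofWalk_adj.2 he)
  have hab' : (toSG (X ∪ ofWalk p)).Adj a b := by rw [toSG_union]; exact Or.inl hab
  refine ⟨a, cons hab' (p.transfer _ hpF), ?_, fun x hx => ?_⟩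
  · rw [cons_isCycle_iff, edges_transfer]
    refine ⟨hp.transfer hpF, fun h => ?_⟩
    obtain ⟨x, hx, hxS⟩ := hfresh _ h
    rcases Sym2.mem_iff.1 hx with rfl | rfl
    exacts [hxS (hXS (mem_verts_iff.2 ⟨b, hab⟩)), hxS (hXS (mem_verts_iff.2 ⟨a, hab.symm⟩))]
  rw [support_cons, support_transfer]
  refine List.mem_cons_of_mem _ ?_
  rcases Finset.mem_union.1 (verts_union X _ ▸ hx) with hx | hx
  · exact hSp x (hXS hx)
  · obtain ⟨y, hy⟩ := mem_verts_iff.1 hx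
    exact p.fst_mem_support_of_mem_edges (toSG_ofWalk_adj.1 hy)

theorem edges_subset_edges_of_isCycle (hp : p.IsPath) (hXS : X.verts ⊆ S)
    (hfresh : ∀ e ∈ p.edges, ∃ x ∈ e, x ∉ S) (ha : a ∈ S) (hb : b ∈ S) {u : V}
    {w : (toSG (X ∪ ofWalk p)).Walk u u} (hw : w.IsCycle) (hpw : p.support ⊆ w.support) :
    p.edges ⊆ w.edges := by
  -- a vertex outside `S` has no edges but those of `p`, and `w` must use both of them
  have hfresh_nbhd : ∀ x ∈ p.support, x ∉ S →
      w.toSubgraph.neighborSet x = p.toSubgraph.neighborSet x := by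
    intro x hx hxS
    refine Set.eq_of_subset_of_ncard_le (fun y hy => ?_) ?_ p.finite_neighborSet_toSubgraph
    · have hxy := w.toSubgraph.adj_sub hy
      rw [toSG_union, sup_adj] at hxy
      rcases hxy with hxy | hxy
      · exact absurd (hXS (mem_verts_iff.2 ⟨y, hxy⟩)) hxS
      · exact adj_toSubgraph_iff_mem_edges.2 (toSG_ofWalk_adj.1 hxy)
    · rw [hp.ncard_neighborSet_toSubgraph_eq_two hx (by rintro rfl; exact hxS hb)
        (by rintro rfl; exact hxS ha), hw.ncard_neighborSet_toSubgraph_eq_two (hpw hx)]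
  intro e he
  obtain ⟨z, hz, hzS⟩ := hfresh e he
  obtain ⟨y, rfl⟩ := Sym2.mem_iff_exists.1 hz
  have : y ∈ w.toSubgraph.neighborSet z := by
    rw [hfresh_nbhd z (p.fst_mem_support_of_mem_edges he) hzS]
    exact adj_toSubgraph_iff_mem_edges.2 he
  exact adj_toSubgraph_iff_mem_edges.1 this

theorem not_isHamiltonian_union_ofWalk (hp : p.IsPath) (hXS : X.verts ⊆ S)
    (hSp : ∀ x ∈ S, x ∈ p.support) (hfresh : ∀ e ∈ p.edges, ∃ x ∈ e, x ∉ S)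
    (ha : a ∈ S) (hb : b ∈ S) (hne : a ≠ b) (hab : ¬ (toSG X).Adj a b) :
    ¬ (X ∪ ofWalk p).IsHamiltonian := by
  rintro ⟨u, w, hw, hcov⟩
  have hverts : ∀ x, x ∈ (X ∪ ofWalk p).verts ↔ x ∈ p.support := fun x => by
    rw [verts_union, Finset.mem_union, mem_verts_ofWalk (not_nil_of_ne hne.symm)]
    exact ⟨fun h => h.elim (fun hx => hSp x (hXS hx)) id, Or.inr⟩
  have hwp : w.support ⊆ p.support := fun x hx =>
    (hverts x).1 (mem_verts_of_mem_support hw.not_nil hx)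
  have hpw := edges_subset_edges_of_isCycle hp hXS hfresh ha hb hw
    fun x hx => hcov x ((hverts x).2 hx)
  have hadj := w.adj_of_mem_edges (hw.mem_edges_of_isPath hp hne hpw hwp)
  rw [toSG_union, sup_adj] at hadj
  refine hadj.elim hab fun h => ?_
  obtain ⟨x, hx, hxS⟩ := hfresh _ (toSG_ofWalk_adj.1 h)
  rcases Sym2.mem_iff.1 hx with rfl | rfl
  exacts [hxS ha, hxS hb]

end FreshPath

theorem exists_isHamiltonian_union_not_isHamiltonian_union [Infinite V] {G H : EGraph V}
    {e : {e : Finset V // e.card = 2}} (heG : e ∈ G) (heH : e ∉ H) :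
    ∃ F : EGraph V, (G ∪ F).IsHamiltonian ∧ ¬ (H ∪ F).IsHamiltonian := by
  obtain ⟨a, b, hab, he⟩ := Finset.card_eq_two.1 e.2
  have hG : (toSG G).Adj a b := toSG_adj.2 ⟨e, heG, he⟩
  have hH : ¬ (toSG H).Adj a b := fun h => by
    obtain ⟨e', he', he'ab⟩ := toSG_adj.1 h
    exact heH (Subtype.ext (he'ab.trans he.symm) ▸ he')
  set S := G.verts ∪ H.verts
  have ha : a ∈ S := Finset.mem_union_left _ (mem_verts_iff.2 ⟨b, hG⟩)
  have hb : b ∈ S := Finset.mem_union_left _ (mem_verts_iff.2 ⟨a, hG.symm⟩)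
  obtain ⟨p, hp, hpS, hfresh⟩ := exists_isPath_top_fresh S ha (T := S \ {a, b})
    Finset.sdiff_subset (by simp) hb hab.symm (by simp)
  have hSp : ∀ x ∈ S, x ∈ p.support := fun x hx => (hpS x hx).2 (by
    simp only [Finset.mem_sdiff, Finset.mem_insert, Finset.mem_singleton, hx, true_and]
    tauto)
  exact ⟨ofWalk p, isHamiltonian_union_ofWalk hp Finset.subset_union_left hSp hfresh hG,
    not_isHamiltonian_union_ofWalk hp Finset.subset_union_right hSp hfresh ha hb hab hH⟩

theorem subset_of_forall_isHamiltonian_union_iff [Infinite V] {G H : EGraph V}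
    (hGH : ∀ F : EGraph V, (G ∪ F).IsHamiltonian ↔ (H ∪ F).IsHamiltonian) : G ⊆ H :=
  fun e heG => by
    by_contra heH
    obtain ⟨F, hG, hH⟩ := exists_isHamiltonian_union_not_isHamiltonian_union heG heH
    exact hH ((hGH F).1 hG)

end EGraph

theorem stmt12_general {V : Type} [Infinite V] [DecidableEq V]
    (G H : EGraph V) :
    (∀ F : EGraph V,
        (EGraph.IsHamiltonian (G ∪ F) ↔ EGraph.IsHamiltonian (H ∪ F))) ↔
      G = H := by
  refine ⟨fun hGH => ?_, fun h _ => h ▸ Iff.rfl⟩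
  exact (EGraph.subset_of_forall_isHamiltonian_union_iff hGH).antisymm
    (EGraph.subset_of_forall_isHamiltonian_union_iff fun F => (hGH F).symm)

/-- Two graphs are strongly equivalent with respect to hamiltonicity iff they
are equal. -/
theorem stmt12 {V : Type} [Countable V] [Infinite V] [DecidableEq V]
    (G H : EGraph V) :
    (∀ F : EGraph V,
        (EGraph.IsHamiltonian (G ∪ F) ↔ EGraph.IsHamiltonian (H ∪ F))) ↔
      G = H :=
  stmt12_general G H
end

section
/- A graph property Φ is strong if and only if Φ is monotone and for every graph G ∉ Φ and every edge e ∈ G, G ≢^Φₛ G − e. -/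
/-- Helper: under monotonicity and criticality, two non-members `G ≠ H` with an
edge `e ∈ G \ H` are distinguished by some `F`. -/
lemma helper_distinguish {V : Type} [DecidableEq V] (Φ : Set (EGraph V))
    (mono : ∀ G H : EGraph V, G ⊆ H → G ∈ Φ → H ∈ Φ)
    (crit : ∀ G : EGraph V, G ∉ Φ → ∀ e ∈ G,
      ¬ (∀ F : EGraph V, ((G ∪ F) ∈ Φ ↔ ((G.erase e) ∪ F) ∈ Φ)))
    (G H : EGraph V) (hG : G ∉ Φ) (hH : H ∉ Φ)
    {e : {e : Finset V // e.card = 2}} (heG : e ∈ G) (heH : e ∉ H)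
    (heq : ∀ F : EGraph V, ((G ∪ F) ∈ Φ ↔ (H ∪ F) ∈ Φ)) : False := by
  set K : EGraph V := G ∪ H with hK
  by_cases hKΦ : K ∈ Φ
  · -- F = H distinguishes: G ∪ H ∈ Φ but H ∪ H = H ∉ Φ
    have := (heq H).mp hKΦ
    rw [Finset.union_self] at this
    exact hH this
  · have hcrit := crit K hKΦ e (Finset.mem_union_left _ heG)
    push_neg at hcrit
    obtain ⟨F, hF⟩ := hcrit
    -- orientation forced by monotonicity
    have hsub : (K.erase e) ∪ F ⊆ K ∪ F :=
      Finset.union_subset_union_left (Finset.erase_subset _ _)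
    have hKF : (K ∪ F) ∈ Φ ∧ (K.erase e ∪ F) ∉ Φ := by
      rcases hF with h | h
      · exact h
      · exact absurd (mono _ _ hsub h.2) h.1
    -- apply heq at F' = K.erase e ∪ F
    have hGK : G ∪ K.erase e = K := by
      ext x
      by_cases hx : x = e
      · subst hx
        simp [hK, heG]
      · simp only [hK, Finset.mem_union, Finset.mem_erase, hx,
          ne_eq, not_false_eq_true, true_and]
        tauto
    have hHK : H ∪ K.erase e = K.erase e := by
      apply Finset.union_eq_right.mpr
      exact Finset.subset_erase.mpr ⟨Finset.subset_union_right, heH⟩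
    have := heq (K.erase e ∪ F)
    rw [← Finset.union_assoc, ← Finset.union_assoc, hGK, hHK] at this
    exact hKF.2 (this.mp hKF.1)

/-- A graph property `Φ` is strong iff `Φ` is monotone and for every graph
`G ∉ Φ` and every edge `e ∈ G`, `G ≢^Φₛ G − e`. -/
theorem stmt13 {V : Type} [Countable V] [Infinite V] [DecidableEq V]
    (Φ : Set (EGraph V)) :
    (∀ G H : EGraph V,
        (∀ F : EGraph V, ((G ∪ F) ∈ Φ ↔ (H ∪ F) ∈ Φ)) ↔
          ((G ∈ Φ ∧ H ∈ Φ) ∨ G = H)) ↔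
      ((∀ G H : EGraph V, G ⊆ H → G ∈ Φ → H ∈ Φ) ∧
        ∀ G : EGraph V, G ∉ Φ → ∀ e ∈ G,
          ¬ (∀ F : EGraph V, ((G ∪ F) ∈ Φ ↔ ((G.erase e) ∪ F) ∈ Φ))) := by
  constructor
  · intro hs
    constructor
    · -- monotonicity
      intro G H hGH hG
      by_contra hH
      -- no superset of H is in Φ
      have claim : ∀ F : EGraph V, (H ∪ F) ∉ Φ := by
        intro F hHF
        have h1 : ∀ F' : EGraph V, ((G ∪ F') ∈ Φ ↔ ((H ∪ F) ∪ F') ∈ Φ) :=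
          (hs G (H ∪ F)).mpr (Or.inl ⟨hG, hHF⟩)
        have h2 := h1 H
        rw [Finset.union_eq_right.mpr hGH,
          Finset.union_eq_left.mpr (Finset.subset_union_left)] at h2
        exact hH (h2.mpr hHF)
      -- pick a fresh edge e' ∉ H
      obtain ⟨u, hu⟩ := Infinite.exists_notMem_finset H.verts
      obtain ⟨v, hv⟩ := Infinite.exists_notMem_finset (insert u H.verts)
      have huv : u ≠ v := fun h => hv (h ▸ Finset.mem_insert_self u _)
      set e' : {e : Finset V // e.card = 2} :=
        ⟨{u, v}, Finset.card_pair huv⟩ with he'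
      have he'H : e' ∉ H := by
        intro hmem
        apply hu
        have : e'.1 ⊆ H.verts := Finset.le_sup (f := fun e => e.1) hmem
        exact this (Finset.mem_insert_self u _)
      -- H and insert e' H are ≡ₛ, contradicting strongness
      have heq : ∀ F : EGraph V, ((H ∪ F) ∈ Φ ↔ ((insert e' H) ∪ F) ∈ Φ) := by
        intro F
        have h1 : insert e' H ∪ F = H ∪ insert e' F := by
          rw [Finset.insert_union, Finset.union_insert]
        rw [h1]
        exact iff_of_false (claim F) (claim (insert e' F))
      rcases (hs H (insert e' H)).mp heq with ⟨h1, _⟩ | h2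
      · exact hH h1
      · exact he'H (h2 ▸ Finset.mem_insert_self e' H)
    · -- criticality
      intro G hG e heG heq
      rcases (hs G (G.erase e)).mp heq with ⟨h1, _⟩ | h2
      · exact hG h1
      · exact (Finset.notMem_erase e G) (h2 ▸ heG)
  · rintro ⟨mono, crit⟩ G H
    constructor
    · intro heq
      by_contra hne
      push_neg at hne
      obtain ⟨hnboth, hGH⟩ := hne
      have h0 := heq ∅
      rw [Finset.union_empty, Finset.union_empty] at h0
      have hG : G ∉ Φ := fun hG => hnboth hG (h0.mp hG)
      have hH : H ∉ Φ := fun hH => hnboth (h0.mpr hH) hH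
      by_cases hsub : G ⊆ H
      · have : ¬ H ⊆ G := fun h => hGH (Finset.Subset.antisymm hsub h)
        obtain ⟨e, heH, heG⟩ := Finset.not_subset.mp this
        exact helper_distinguish Φ mono crit H G hH hG heH heG
          (fun F => (heq F).symm)
      · obtain ⟨e, heG, heH⟩ := Finset.not_subset.mp hsub
        exact helper_distinguish Φ mono crit G H hG hH heG heH heq
    · rintro (⟨hG, hH⟩ | rfl)
      · intro F
        exact iff_of_true (mono G _ Finset.subset_union_left hG)
          (mono H _ Finset.subset_union_left hH)
      · intro F; rfl
end

section
/- For every cycle H, the property Φ_H of containing a subgraph isomorphic to H is strong: for all graphs G, G' we have G ≡^{Φ_H}ₛ G' iff (both G and G' contain a subgraph isomorphic to H) or G = G'. -/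
/-- `u` and `v` are joined by an edge of `G`. -/
def EGraph.AdjIn {V : Type} [DecidableEq V] (G : EGraph V) (u v : V) : Prop :=
  ∃ e ∈ G, e.1 = ({u, v} : Finset V)

/-- `G` contains a subgraph isomorphic to `H`. -/
def EGraph.ContainsCopy {V : Type} [DecidableEq V] (G H : EGraph V) : Prop :=
  ∃ φ : V → V, Set.InjOn φ (EGraph.verts H : Set V) ∧
    ∀ u v : V, EGraph.AdjIn H u v → EGraph.AdjIn G (φ u) (φ v)

/-- `H` is a cycle: its edges are exactly those of a cyclic sequence of `n ≥ 3`
distinct vertices. -/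
def EGraph.IsCycleGraph {V : Type} [DecidableEq V] (H : EGraph V) : Prop :=
  ∃ n : ℕ, 3 ≤ n ∧ ∃ f : ZMod n → V, Function.Injective f ∧
    (∀ i : ZMod n, EGraph.AdjIn H (f i) (f (i + 1))) ∧
    ∀ e ∈ H, ∃ i : ZMod n, e.1 = ({f i, f (i + 1)} : Finset V)

namespace StrongAux
variable {V : Type} [DecidableEq V]

/-- cycle of length n as subgraph -/
def HasCyc (n : ℕ) (G : EGraph V) : Prop :=
  ∃ g : ZMod n → V, Function.Injective g ∧ ∀ i, EGraph.AdjIn G (g i) (g (i + 1))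

lemma adj_symm {G : EGraph V} {u v : V} (h : EGraph.AdjIn G u v) :
    EGraph.AdjIn G v u := by
  obtain ⟨e, he, h⟩ := h
  exact ⟨e, he, by rw [h, Finset.pair_comm]⟩

lemma adj_union {G F : EGraph V} {u v : V} :
    EGraph.AdjIn (G ∪ F) u v ↔ EGraph.AdjIn G u v ∨ EGraph.AdjIn F u v := by
  simp only [EGraph.AdjIn, Finset.mem_union]
  constructor
  · rintro ⟨e, (h | h), he⟩
    · exact Or.inl ⟨e, h, he⟩
    · exact Or.inr ⟨e, h, he⟩
  · rintro (⟨e, h, he⟩ | ⟨e, h, he⟩)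
    exacts [⟨e, Or.inl h, he⟩, ⟨e, Or.inr h, he⟩]

lemma adj_ne {G : EGraph V} {u v : V} (h : EGraph.AdjIn G u v) : u ≠ v := by
  obtain ⟨e, _, he⟩ := h
  intro huv
  have := e.2
  rw [he, huv] at this
  simp at this

lemma one_ne_zero' {n : ℕ} (hn : 3 ≤ n) : (1 : ZMod n) ≠ 0 := by
  haveI : NeZero n := ⟨by omega⟩
  haveI : Fact (1 < n) := ⟨by omega⟩
  intro h
  have := congrArg ZMod.val h
  rw [ZMod.val_one, ZMod.val_zero] at this
  omega

lemma two_ne_zero' {n : ℕ} (hn : 3 ≤ n) : (2 : ZMod n) ≠ 0 := by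
  haveI : NeZero n := ⟨by omega⟩
  intro h
  have h2 : ((2 : ℕ) : ZMod n) = 0 := by push_cast; exact h
  have := congrArg ZMod.val h2
  rw [ZMod.val_cast_of_lt (by omega), ZMod.val_zero] at this
  omega

lemma mem_pair {a x y : V} : a ∈ ({x, y} : Finset V) ↔ a = x ∨ a = y := by
  simp [Finset.mem_insert, Finset.mem_singleton]

section CopyIff
variable {Hc : EGraph V} {n : ℕ} {f : ZMod n → V}

lemma verts_eq_range (hn : 3 ≤ n) (hf : Function.Injective f)
    (hadj : ∀ i, EGraph.AdjIn Hc (f i) (f (i + 1)))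
    (hall : ∀ e ∈ Hc, ∃ i : ZMod n, e.1 = ({f i, f (i + 1)} : Finset V)) :
    (EGraph.verts Hc : Set V) = Set.range f := by
  ext v
  simp only [Set.mem_range]
  constructor
  · intro hv
    rw [EGraph.verts, Finset.mem_coe, Finset.mem_sup] at hv
    obtain ⟨e, he, hve⟩ := hv
    obtain ⟨i, hi⟩ := hall e he
    rw [hi, mem_pair] at hve
    rcases hve with h | h
    exacts [⟨i, h.symm⟩, ⟨i + 1, h.symm⟩]
  · rintro ⟨i, rfl⟩
    obtain ⟨e, he, hi⟩ := hadj i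
    rw [EGraph.verts, Finset.mem_coe, Finset.mem_sup]
    exact ⟨e, he, by rw [hi]; exact mem_pair.mpr (Or.inl rfl)⟩

lemma copy_iff (hn : 3 ≤ n) (hf : Function.Injective f)
    (hadj : ∀ i, EGraph.AdjIn Hc (f i) (f (i + 1)))
    (hall : ∀ e ∈ Hc, ∃ i : ZMod n, e.1 = ({f i, f (i + 1)} : Finset V))
    (G : EGraph V) : EGraph.ContainsCopy G Hc ↔ HasCyc n G := by
  have hverts := verts_eq_range hn hf hadj hall
  constructor
  · rintro ⟨φ, hφ, hmap⟩
    refine ⟨φ ∘ f, ?_, fun i => hmap _ _ (hadj i)⟩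
    intro a b hab
    apply hf
    refine hφ ?_ ?_ hab <;> rw [hverts]
    exacts [⟨a, rfl⟩, ⟨b, rfl⟩]
  · rintro ⟨g, hg, hcyc⟩
    classical
    refine ⟨fun v => if h : ∃ i, f i = v then g h.choose else v, ?_, ?_⟩
    · intro x hx y hy hxy
      rw [hverts] at hx hy
      obtain ⟨a, rfl⟩ := hx
      obtain ⟨b, rfl⟩ := hy
      have ha : ∃ i, f i = f a := ⟨a, rfl⟩
      have hb : ∃ i, f i = f b := ⟨b, rfl⟩
      simp only [dif_pos ha, dif_pos hb] at hxy
      have : a = b := by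
        have h1 : ha.choose = a := hf ha.choose_spec
        have h2 : hb.choose = b := hf hb.choose_spec
        rw [← h1, ← h2]; exact hg hxy
      rw [this]
    · intro u v huv
      obtain ⟨e, he, heuv⟩ := huv
      obtain ⟨i, hi⟩ := hall e he
      have hpair : ({u, v} : Finset V) = {f i, f (i + 1)} := by rw [← heuv, hi]
      have huv' : u ≠ v := by
        intro h
        have := e.2
        rw [heuv, h] at this
        simp at this
      have hφf : ∀ j : ZMod n,
          (if h : ∃ i, f i = f j then g h.choose else f j) = g j := by
        intro j
        have hj : ∃ i, f i = f j := ⟨j, rfl⟩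
        rw [dif_pos hj]
        exact congrArg g (hf hj.choose_spec)
      have hu : u = f i ∨ u = f (i + 1) := by
        have : u ∈ ({f i, f (i+1)} : Finset V) := by
          rw [← hpair]; exact mem_pair.mpr (Or.inl rfl)
        exact mem_pair.mp this
      have hv : v = f i ∨ v = f (i + 1) := by
        have : v ∈ ({f i, f (i+1)} : Finset V) := by
          rw [← hpair]; exact mem_pair.mpr (Or.inr rfl)
        exact mem_pair.mp this
      rcases hu with rfl | rfl
      · rcases hv with rfl | rfl
        · exact absurd rfl huv'
        · simp only [hφf]; exact hcyc i
      · rcases hv with rfl | rfl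
        · simp only [hφf]; exact adj_symm (hcyc i)
        · exact absurd rfl huv'
end CopyIff

section Path
variable (n : ℕ) (p : ℕ → V)
  (hp : ∀ a b, a < n → b < n → p a = p b → a = b)

/-- the path p 0 - p 1 - ... - p (n-1) as a graph -/
def pathF : EGraph V :=
  (Finset.range (n - 1)).attach.image fun j =>
    ⟨{p j.1, p (j.1 + 1)}, Finset.card_pair (by
      have hj := Finset.mem_range.mp j.2
      intro h
      have := hp j.1 (j.1 + 1) (by omega) (by omega) h
      omega)⟩

lemma mem_pathF {e : {e : Finset V // e.card = 2}} :
    e ∈ pathF n p hp ↔ ∃ j, j < n - 1 ∧ e.1 = {p j, p (j + 1)} := by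
  unfold pathF
  rw [Finset.mem_image]
  constructor
  · rintro ⟨j, _, rfl⟩
    exact ⟨j.1, Finset.mem_range.mp j.2, rfl⟩
  · rintro ⟨j, hj, hej⟩
    refine ⟨⟨j, Finset.mem_range.mpr hj⟩, Finset.mem_attach _ _, ?_⟩
    exact Subtype.ext hej.symm

lemma adj_pathF {u v : V} :
    EGraph.AdjIn (pathF n p hp) u v ↔
      ∃ j, j < n - 1 ∧ ({u, v} : Finset V) = {p j, p (j + 1)} := by
  constructor
  · rintro ⟨e, he, heuv⟩
    obtain ⟨j, hj, hej⟩ := (mem_pathF n p hp).mp he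
    exact ⟨j, hj, by rw [← heuv, hej]⟩
  · rintro ⟨j, hj, hpair⟩
    have hne : p j ≠ p (j + 1) := fun h => by
      have := hp j (j + 1) (by omega) (by omega) h; omega
    exact ⟨⟨{p j, p (j+1)}, Finset.card_pair hne⟩,
      (mem_pathF n p hp).mpr ⟨j, hj, rfl⟩, hpair.symm⟩

lemma hasCyc_union_path (hn : 3 ≤ n) (G : EGraph V)
    (he : EGraph.AdjIn G (p (n - 1)) (p 0)) :
    HasCyc n (G ∪ pathF n p hp) := by
  haveI : NeZero n := ⟨by omega⟩
  haveI : Fact (1 < n) := ⟨by omega⟩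
  refine ⟨fun i => p i.val, ?_, ?_⟩
  · intro a b hab
    exact ZMod.val_injective n (hp a.val b.val (ZMod.val_lt a) (ZMod.val_lt b) hab)
  · intro i
    have hval : (i + 1).val = (i.val + 1) % n := by
      rw [ZMod.val_add, ZMod.val_one]
    rcases Nat.lt_or_ge i.val (n - 1) with h | h
    · have : (i + 1).val = i.val + 1 := by
        rw [hval, Nat.mod_eq_of_lt (by omega)]
      simp only []
      rw [this]
      exact adj_union.mpr (Or.inr ((adj_pathF n p hp).mpr ⟨i.val, h, rfl⟩))
    · have hiv : i.val = n - 1 := by have := ZMod.val_lt i; omega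
      have : (i + 1).val = 0 := by rw [hval, hiv]; simp [Nat.sub_add_cancel (by omega : 1 ≤ n)]
      simp only []
      rw [this, hiv]
      exact adj_union.mpr (Or.inl he)
end Path

section Key
variable {n : ℕ} {G' : EGraph V} {p : ℕ → V}
  {hp : ∀ a b, a < n → b < n → p a = p b → a = b}

lemma nbr (hn : 3 ≤ n)
    (hfresh : ∀ m, 1 ≤ m → m ≤ n - 2 → p m ∉ EGraph.verts G')
    {m : ℕ} (hm1 : 1 ≤ m) (hm2 : m ≤ n - 2) {x : V}
    (hadj : EGraph.AdjIn (G' ∪ pathF n p hp) (p m) x) :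
    x = p (m - 1) ∨ x = p (m + 1) := by
  rcases adj_union.mp hadj with h | h
  · exfalso
    obtain ⟨e, he, hE⟩ := h
    apply hfresh m hm1 hm2
    rw [EGraph.verts, Finset.mem_sup]
    exact ⟨e, he, by rw [hE]; exact mem_pair.mpr (Or.inl rfl)⟩
  · obtain ⟨j, hj, hpair⟩ := (adj_pathF n p hp).mp h
    have hmem : p m = p j ∨ p m = p (j + 1) := by
      have : p m ∈ ({p j, p (j+1)} : Finset V) := by
        rw [← hpair]; exact mem_pair.mpr (Or.inl rfl)
      exact mem_pair.mp this
    have hm : m = j ∨ m = j + 1 := by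
      rcases hmem with h' | h'
      · exact Or.inl (hp m j (by omega) (by omega) h')
      · exact Or.inr (hp m (j+1) (by omega) (by omega) h')
    rcases hm with rfl | rfl
    · -- x = p (m+1)
      right
      have : p (m + 1) ∈ ({p m, x} : Finset V) := by
        rw [hpair]; exact mem_pair.mpr (Or.inr rfl)
      rcases mem_pair.mp this with h' | h'
      · exact absurd (hp (m+1) m (by omega) (by omega) h') (by omega)
      · exact h'.symm
    · -- m = j+1, x = p j = p (m-1)
      left
      have : p j ∈ ({p (j+1), x} : Finset V) := by
        rw [hpair]; exact mem_pair.mpr (Or.inl rfl)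
      rcases mem_pair.mp this with h' | h'
      · exact absurd (hp j (j+1) (by omega) (by omega) h') (by omega)
      · simpa using h'.symm

lemma keyU (hn : 3 ≤ n)
    (hfresh : ∀ m, 1 ≤ m → m ≤ n - 2 → p m ∉ EGraph.verts G')
    (hedge : ¬ EGraph.AdjIn G' (p 0) (p (n - 1)))
    (g : ZMod n → V) (hg : Function.Injective g)
    (hcyc : ∀ i, EGraph.AdjIn (G' ∪ pathF n p hp) (g i) (g (i + 1)))
    (i₁ : ZMod n) (h0 : g (i₁ - 1) = p 0) (h1 : g i₁ = p 1) : False := by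
  haveI : NeZero n := ⟨by omega⟩
  have h2 : (2 : ZMod n) ≠ 0 := two_ne_zero' hn
  have S : ∀ t : ℕ, t + 1 ≤ n - 1 →
      g (i₁ - 1 + (t : ZMod n)) = p t ∧ g (i₁ - 1 + ((t + 1 : ℕ) : ZMod n)) = p (t + 1) := by
    intro t
    induction t with
    | zero =>
      intro _
      constructor
      · simpa using h0
      · have : i₁ - 1 + ((1 : ℕ) : ZMod n) = i₁ := by push_cast; ring
        rw [this]; exact h1
    | succ t ih =>
      intro ht
      have iht := ih (by omega)
      refine ⟨iht.2, ?_⟩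
      have hadj : EGraph.AdjIn (G' ∪ pathF n p hp) (p (t + 1))
          (g ((i₁ - 1 + ((t + 1 : ℕ) : ZMod n)) + 1)) := by
        rw [← iht.2]; exact hcyc _
      have := nbr hn hfresh (m := t + 1) (by omega) (by omega) hadj
      have hne : g ((i₁ - 1 + ((t + 1 : ℕ) : ZMod n)) + 1) ≠ p t := by
        intro h
        rw [← iht.1] at h
        have := hg h
        have h20 : ((i₁ - 1 + ((t + 1 : ℕ) : ZMod n)) + 1) - (i₁ - 1 + (t : ZMod n))
            = 2 := by push_cast; ring
        rw [this] at h20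
        simp at h20
        exact h2 h20.symm
      have hx : g ((i₁ - 1 + ((t + 1 : ℕ) : ZMod n)) + 1) = p (t + 2) := by
        rcases this with h | h
        · exact absurd (by simpa using h) hne
        · exact h
      have harith : (i₁ - 1 + ((t + 1 : ℕ) : ZMod n)) + 1
          = i₁ - 1 + ((t + 1 + 1 : ℕ) : ZMod n) := by push_cast; ring
      rw [← harith, hx]
  have hS := S (n - 2) (by omega)
  have hlast : g (i₁ - 1 + ((n - 1 : ℕ) : ZMod n)) = p (n - 1) := by
    have e1 : n - 2 + 1 = n - 1 := by omega
    have := hS.2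
    rw [e1] at this
    exact this
  have hwrap : (i₁ - 1 + ((n - 1 : ℕ) : ZMod n)) + 1 = i₁ - 1 := by
    have : ((n - 1 : ℕ) : ZMod n) + 1 = 0 := by
      have : ((n - 1 : ℕ) : ZMod n) + ((1 : ℕ) : ZMod n) = ((n - 1 + 1 : ℕ) : ZMod n) := by
        push_cast; ring
      rw [show ((1:ℕ) : ZMod n) = 1 from by push_cast; ring] at this
      rw [this, show n - 1 + 1 = n from by omega]
      exact ZMod.natCast_self n
    calc (i₁ - 1 + ((n - 1 : ℕ) : ZMod n)) + 1
        = i₁ - 1 + (((n - 1 : ℕ) : ZMod n) + 1) := by ring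
      _ = i₁ - 1 := by rw [this]; ring
  have hadj : EGraph.AdjIn (G' ∪ pathF n p hp) (p (n - 1)) (p 0) := by
    have := hcyc (i₁ - 1 + ((n - 1 : ℕ) : ZMod n))
    rw [hwrap, hlast, h0] at this
    exact this
  rcases adj_union.mp hadj with h | h
  · exact hedge (adj_symm h)
  · obtain ⟨j, hj, hpair⟩ := (adj_pathF n p hp).mp h
    have hpj : p j ∈ ({p (n-1), p 0} : Finset V) := by
      rw [hpair]; exact mem_pair.mpr (Or.inl rfl)
    have hj0 : j = 0 := by
      rcases mem_pair.mp hpj with h' | h'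
      · exact absurd (hp j (n-1) (by omega) (by omega) h') (by omega)
      · exact hp j 0 (by omega) (by omega) h'
    subst hj0
    have hpj1 : p 1 ∈ ({p (n-1), p 0} : Finset V) := by
      rw [hpair]; exact mem_pair.mpr (Or.inr rfl)
    rcases mem_pair.mp hpj1 with h' | h'
    · exact absurd (hp 1 (n-1) (by omega) (by omega) h') (by omega)
    · exact absurd (hp 1 0 (by omega) (by omega) h') (by omega)

lemma key (hn : 3 ≤ n)
    (hfresh : ∀ m, 1 ≤ m → m ≤ n - 2 → p m ∉ EGraph.verts G')
    (hedge : ¬ EGraph.AdjIn G' (p 0) (p (n - 1)))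
    (hnc : ¬ HasCyc n G') : ¬ HasCyc n (G' ∪ pathF n p hp) := by
  rintro ⟨g, hg, hcyc⟩
  haveI : NeZero n := ⟨by omega⟩
  have h2 : (2 : ZMod n) ≠ 0 := two_ne_zero' hn
  have hne2 : ∀ i : ZMod n, i + 1 ≠ i - 1 := by
    intro i h
    apply h2
    have : (i + 1) - (i - 1) = 2 := by ring
    rw [h] at this
    simpa using this.symm
  -- some cycle vertex is an internal path vertex
  have hint : ∃ i : ZMod n, ∃ m : ℕ, 1 ≤ m ∧ m ≤ n - 2 ∧ g i = p m := by
    by_cases hall : ∀ i, EGraph.AdjIn G' (g i) (g (i + 1))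
    · exact absurd ⟨g, hg, hall⟩ hnc
    · push_neg at hall
      obtain ⟨i₀, hi₀⟩ := hall
      have := hcyc i₀
      rcases adj_union.mp this with h | h
      · exact absurd h hi₀
      · obtain ⟨j, hj, hpair⟩ := (adj_pathF n p hp).mp h
        rcases Nat.eq_zero_or_pos j with rfl | hjpos
        · have : p 1 ∈ ({g i₀, g (i₀ + 1)} : Finset V) := by
            rw [hpair]; exact mem_pair.mpr (Or.inr rfl)
          rcases mem_pair.mp this with h' | h'
          exacts [⟨i₀, 1, le_refl 1, by omega, h'.symm⟩,
            ⟨i₀ + 1, 1, le_refl 1, by omega, h'.symm⟩]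
        · have : p j ∈ ({g i₀, g (i₀ + 1)} : Finset V) := by
            rw [hpair]; exact mem_pair.mpr (Or.inl rfl)
          rcases mem_pair.mp this with h' | h'
          exacts [⟨i₀, j, hjpos, by omega, h'.symm⟩,
            ⟨i₀ + 1, j, hjpos, by omega, h'.symm⟩]
  -- descend to p 1
  have D : ∀ m : ℕ, 1 ≤ m → m ≤ n - 2 → (∃ i, g i = p m) → ∃ i, g i = p 1 := by
      intro m
      induction m with
      | zero => omega
      | succ m ih =>
        intro _ hm2 hex
        obtain ⟨i, hi⟩ := hex
        rcases Nat.eq_zero_or_pos m with rfl | hmpos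
        · exact ⟨i, hi⟩
        · have hadjA : EGraph.AdjIn (G' ∪ pathF n p hp) (p (m + 1)) (g (i + 1)) := by
            rw [← hi]; exact hcyc i
          have hadjB : EGraph.AdjIn (G' ∪ pathF n p hp) (p (m + 1)) (g (i - 1)) := by
            have := hcyc (i - 1)
            rw [show i - 1 + 1 = i from by ring, hi] at this
            exact adj_symm this
          have hA := nbr hn hfresh (m := m + 1) (by omega) hm2 hadjA
          have hB := nbr hn hfresh (m := m + 1) (by omega) hm2 hadjB
          simp only [Nat.add_sub_cancel] at hA hB
          rcases hA with hA | hA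
          · exact ih (by omega) (by omega) ⟨i + 1, hA⟩
          · rcases hB with hB | hB
            · exact ih (by omega) (by omega) ⟨i - 1, hB⟩
            · exact absurd (hg (hA.trans hB.symm)) (hne2 i)
  have hone : ∃ i : ZMod n, g i = p 1 := by
    obtain ⟨i, m, hm1, hm2, him⟩ := hint
    exact D m hm1 hm2 ⟨i, him⟩
  obtain ⟨i₁, h1⟩ := hone
  -- its two cycle-neighbors are p 0 and p 2; orient and apply keyU
  have hadjA : EGraph.AdjIn (G' ∪ pathF n p hp) (p 1) (g (i₁ + 1)) := by
    rw [← h1]; exact hcyc i₁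
  have hadjB : EGraph.AdjIn (G' ∪ pathF n p hp) (p 1) (g (i₁ - 1)) := by
    have := hcyc (i₁ - 1)
    rw [show i₁ - 1 + 1 = i₁ from by ring, h1] at this
    exact adj_symm this
  have hA := nbr hn hfresh (m := 1) (le_refl 1) (by omega) hadjA
  have hB := nbr hn hfresh (m := 1) (le_refl 1) (by omega) hadjB
  norm_num at hA hB
  rcases hB with hB | hB
  · exact keyU hn hfresh hedge g hg hcyc i₁ hB h1
  · have hA0 : g (i₁ + 1) = p 0 := by
      rcases hA with hA | hA
      · exact hA
      · exact absurd (hg (hA.trans hB.symm)) (hne2 i₁)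
    -- reflected cycle
    set gr : ZMod n → V := fun i => g (i₁ + i₁ - i) with hgr
    have hgrinj : Function.Injective gr := by
      intro a b hab
      have := hg hab
      have : i₁ + i₁ - a = i₁ + i₁ - b := this
      linear_combination -this
    have hgrcyc : ∀ i, EGraph.AdjIn (G' ∪ pathF n p hp) (gr i) (gr (i + 1)) := by
      intro i
      have := hcyc (i₁ + i₁ - i - 1)
      rw [show i₁ + i₁ - i - 1 + 1 = i₁ + i₁ - i from by ring] at this
      have := adj_symm this
      simpa [hgr, show i₁ + i₁ - (i + 1) = i₁ + i₁ - i - 1 from by ring] using this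
    have hgr1 : gr i₁ = p 1 := by
      simp only [hgr]
      rw [show i₁ + i₁ - i₁ = i₁ from by ring]
      exact h1
    have hgr0 : gr (i₁ - 1) = p 0 := by
      simp only [hgr]
      rw [show i₁ + i₁ - (i₁ - 1) = i₁ + 1 from by ring]
      exact hA0
    exact keyU hn hfresh hedge gr hgrinj hgrcyc i₁ hgr0 hgr1
end Key

lemma copy_mono {G F Hc : EGraph V} (h : EGraph.ContainsCopy G Hc) :
    EGraph.ContainsCopy (G ∪ F) Hc := by
  obtain ⟨φ, h1, h2⟩ := h
  exact ⟨φ, h1, fun u v huv => adj_union.mpr (Or.inl (h2 u v huv))⟩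

lemma step [Infinite V] {n : ℕ} (hn : 3 ≤ n) (G G' : EGraph V)
    (H : ∀ F, HasCyc n (G ∪ F) ↔ HasCyc n (G' ∪ F))
    (hG' : ¬ HasCyc n G') {e : {e : Finset V // e.card = 2}} (he : e ∈ G) :
    e ∈ G' := by
  by_contra hne
  obtain ⟨u, v, huv, hpair⟩ := Finset.card_eq_two.mp e.2
  set S : Finset V := EGraph.verts G' ∪ {u, v} with hS
  have huS : u ∈ S := by simp [hS]
  have hvS : v ∈ S := by simp [hS]
  have hinf : ((↑S : Set V)ᶜ).Infinite := S.finite_toSet.infinite_compl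
  set w : ℕ ↪ ↥((↑S : Set V)ᶜ) := hinf.natEmbedding with hw
  have wmem : ∀ k, (w k : V) ∉ S := fun k => (w k).2
  have winj : ∀ a b : ℕ, (w a : V) = (w b : V) → a = b :=
    fun a b h => w.injective (Subtype.ext h)
  set p : ℕ → V := fun m => if m = 0 then u else if m = n - 1 then v else (w (m - 1) : V)
    with hpdef
  have hp0 : p 0 = u := by simp [hpdef]
  have hpn : p (n - 1) = v := by
    simp only [hpdef]
    rw [if_neg (show ¬(n - 1 = 0) by omega)]
    simp
  have hpmid : ∀ m, m ≠ 0 → m ≠ n - 1 → p m = (w (m - 1) : V) := by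
    intro m h1 h2
    simp only [hpdef]
    rw [if_neg h1, if_neg h2]
  have hp : ∀ a b, a < n → b < n → p a = p b → a = b := by
    intro a b ha hb h
    by_cases ha0 : a = 0 <;> by_cases han : a = n - 1 <;>
      by_cases hb0 : b = 0 <;> by_cases hbn : b = n - 1 <;>
      try omega
    · subst ha0; subst hbn; rw [hp0, hpn] at h; exact absurd h huv
    · subst ha0
      rw [hp0, hpmid b hb0 hbn] at h
      exact absurd huS (h ▸ wmem (b - 1))
    · subst han; subst hb0; rw [hpn, hp0] at h; exact absurd h.symm huv
    · subst han
      rw [hpn, hpmid b hb0 hbn] at h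
      exact absurd hvS (h ▸ wmem (b - 1))
    · subst hb0
      rw [hp0, hpmid a ha0 han] at h
      exact absurd huS (h.symm ▸ wmem (a - 1))
    · subst hbn
      rw [hpn, hpmid a ha0 han] at h
      exact absurd hvS (h.symm ▸ wmem (a - 1))
    · rw [hpmid a ha0 han, hpmid b hb0 hbn] at h
      have := winj _ _ h
      omega
  have hfresh : ∀ m, 1 ≤ m → m ≤ n - 2 → p m ∉ EGraph.verts G' := by
    intro m h1 h2
    rw [hpmid m (by omega) (by omega)]
    intro hmem
    exact wmem (m - 1) (by exact Finset.mem_union_left _ hmem)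
  have hedge : ¬ EGraph.AdjIn G' (p 0) (p (n - 1)) := by
    rw [hp0, hpn]
    rintro ⟨e', he', hE⟩
    have : e' = e := Subtype.ext (by rw [hE, hpair])
    exact hne (this ▸ he')
  have hpos : EGraph.AdjIn G (p (n - 1)) (p 0) := by
    rw [hp0, hpn]
    exact ⟨e, he, by rw [hpair, Finset.pair_comm]⟩
  have h1 : HasCyc n (G ∪ pathF n p hp) := hasCyc_union_path n p hp hn G hpos
  have h2 : HasCyc n (G' ∪ pathF n p hp) := (H _).mp h1
  exact key hn hfresh hedge hG' h2

end StrongAux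

/-- For every cycle `Hc`, the property of containing a subgraph isomorphic to
`Hc` is strong. -/
theorem stmt15 {V : Type} [Countable V] [Infinite V] [DecidableEq V]
    (Hc : EGraph V) (hHc : EGraph.IsCycleGraph Hc) :
    ∀ G G' : EGraph V,
      (∀ F : EGraph V,
          (EGraph.ContainsCopy (G ∪ F) Hc ↔ EGraph.ContainsCopy (G' ∪ F) Hc)) ↔
        ((EGraph.ContainsCopy G Hc ∧ EGraph.ContainsCopy G' Hc) ∨ G = G') := by
  obtain ⟨n, hn, f, hf, hadj, hall⟩ := hHc
  intro G G'
  have CI : ∀ K : EGraph V, EGraph.ContainsCopy K Hc ↔ StrongAux.HasCyc n K :=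
    StrongAux.copy_iff hn hf hadj hall
  constructor
  · intro H
    have H' : ∀ F, StrongAux.HasCyc n (G ∪ F) ↔ StrongAux.HasCyc n (G' ∪ F) :=
      fun F => (CI _).symm.trans ((H F).trans (CI _))
    have h0 : StrongAux.HasCyc n G ↔ StrongAux.HasCyc n G' := by
      simpa using H' ∅
    by_cases hcy : StrongAux.HasCyc n G'
    · exact Or.inl ⟨(CI G).mpr (h0.mpr hcy), (CI G').mpr hcy⟩
    · refine Or.inr (Finset.ext fun e => ⟨?_, ?_⟩)
      · exact StrongAux.step hn G G' H' hcy
      · exact StrongAux.step hn G' G (fun F => (H' F).symm) (fun h => hcy (h0.mp h))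
  · rintro (⟨h1, h2⟩ | rfl)
    · exact fun F => iff_of_true (StrongAux.copy_mono h1) (StrongAux.copy_mono h2)
    · exact fun F => Iff.rfl
end

section
/- For every positive integer k and graphs G, H, the following are equivalent: (i) G ≡^{cl}ₛ H; (ii) G and H have the same set of proper k-colorings; (iii) for every graph F, the graphs G ∪ F and H ∪ F have the same set of proper k-colorings. -/
/-- `C` is a proper `k`-coloring of `G`: a partition of `V(G)` into at most `k`
(nonempty, pairwise disjoint) blocks, none of which contains both endpoints of
an edge of `G`. -/
def EGraph.IsColoring {V : Type} [DecidableEq V] (k : ℕ) (G : EGraph V)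
    (C : Finset (Finset V)) : Prop :=
  C.card ≤ k ∧ (∀ B ∈ C, B.Nonempty) ∧
    (∀ B ∈ C, ∀ B' ∈ C, B ≠ B' → Disjoint B B') ∧
    C.sup id = EGraph.verts G ∧
    ∀ e ∈ G, ∀ B ∈ C, ¬ e.1 ⊆ B

namespace Aux
variable {V : Type} [DecidableEq V]

lemma edge_subset_verts {G : EGraph V} {e} (he : e ∈ G) : e.1 ⊆ G.verts :=
  Finset.le_sup (f := fun e => e.1) he

lemma verts_union (G F : EGraph V) : (G ∪ F).verts = G.verts ∪ F.verts :=
  Finset.sup_union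

lemma verts_subset {G : EGraph V} {T : Finset V} (h : ∀ e ∈ G, e.1 ⊆ T) :
    G.verts ⊆ T := Finset.sup_le h

/-- all edges with one endpoint in `A`, the other in `B`. -/
def pairsE (A B : Finset V) : EGraph V :=
  ((A ×ˢ B).filter fun p => p.1 ≠ p.2).attach.image fun p =>
    ⟨{p.1.1, p.1.2}, Finset.card_pair (by exact (Finset.mem_filter.mp p.2).2)⟩

lemma mem_pairsE {A B : Finset V} {e : {e : Finset V // e.card = 2}} :
    e ∈ pairsE A B ↔ ∃ a ∈ A, ∃ b ∈ B, a ≠ b ∧ e.1 = {a, b} := by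
  unfold pairsE
  rw [Finset.mem_image]
  constructor
  · rintro ⟨p, -, rfl⟩
    have hp := Finset.mem_filter.mp p.2
    have hm := Finset.mem_product.mp hp.1
    exact ⟨p.1.1, hm.1, p.1.2, hm.2, hp.2, rfl⟩
  · rintro ⟨a, ha, b, hb, hab, he⟩
    refine ⟨⟨(a, b), ?_⟩, Finset.mem_attach _ _, ?_⟩
    · exact Finset.mem_filter.mpr ⟨Finset.mem_product.mpr ⟨ha, hb⟩, hab⟩
    · exact Subtype.ext he.symm

lemma pairsE_intro {A B : Finset V} {a b : V} (ha : a ∈ A) (hb : b ∈ B)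
    (hab : a ≠ b) : (⟨{a, b}, Finset.card_pair hab⟩ : {e : Finset V // e.card = 2}) ∈ pairsE A B :=
  mem_pairsE.mpr ⟨a, ha, b, hb, hab, rfl⟩

lemma block_subset_verts {k} {G : EGraph V} {C} (hC : EGraph.IsColoring k G C)
    {B} (hB : B ∈ C) : B ⊆ G.verts := by
  have : B ≤ C.sup id := Finset.le_sup (f := id) hB
  rwa [hC.2.2.2.1] at this

lemma block_unique {k} {G : EGraph V} {C} (hC : EGraph.IsColoring k G C)
    {B B' : Finset V} (hB : B ∈ C) (hB' : B' ∈ C) {x} (h1 : x ∈ B) (h2 : x ∈ B') :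
    B = B' := by
  by_contra hne
  exact Finset.disjoint_left.mp (hC.2.2.1 B hB B' hB' hne) h1 h2

lemma mem_block_of_mem_verts {k} {G : EGraph V} {C} (hC : EGraph.IsColoring k G C)
    {x} (hx : x ∈ G.verts) : ∃ B ∈ C, x ∈ B := by
  rw [← hC.2.2.2.1] at hx
  simpa using Finset.mem_sup.mp hx

lemma restrict {k} {G G' : EGraph V} {D} (hsub : G ⊆ G')
    (hD : EGraph.IsColoring k G' D) :
    EGraph.IsColoring k G ((D.image (· ∩ G.verts)).erase ∅) := by
  have hvsub : G.verts ⊆ G'.verts := Finset.le_iff_subset.mp (Finset.sup_mono hsub)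
  refine ⟨?_, ?_, ?_, ?_, ?_⟩
  · calc ((D.image (· ∩ G.verts)).erase ∅).card ≤ (D.image (· ∩ G.verts)).card :=
        Finset.card_le_card (Finset.erase_subset _ _)
    _ ≤ D.card := Finset.card_image_le
    _ ≤ k := hD.1
  · intro B hB
    exact Finset.nonempty_iff_ne_empty.mpr (Finset.ne_of_mem_erase hB)
  · intro B hB B' hB' hne
    obtain ⟨B1, hB1, rfl⟩ := Finset.mem_image.mp (Finset.mem_of_mem_erase hB)
    obtain ⟨B2, hB2, rfl⟩ := Finset.mem_image.mp (Finset.mem_of_mem_erase hB')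
    have h12 : B1 ≠ B2 := by rintro rfl; exact hne rfl
    exact Finset.disjoint_left.mpr fun {x} hx hx' =>
      Finset.disjoint_left.mp (hD.2.2.1 B1 hB1 B2 hB2 h12)
        (Finset.mem_inter.mp hx).1 (Finset.mem_inter.mp hx').1
  · apply Finset.Subset.antisymm
    · rw [← Finset.le_iff_subset]
      apply Finset.sup_le
      intro B hB
      obtain ⟨B1, hB1, rfl⟩ := Finset.mem_image.mp (Finset.mem_of_mem_erase hB)
      exact Finset.le_iff_subset.mpr Finset.inter_subset_right
    · intro x hx
      obtain ⟨B, hB, hxB⟩ := mem_block_of_mem_verts hD (hvsub hx)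
      have hmem : B ∩ G.verts ∈ (D.image (· ∩ G.verts)).erase ∅ := by
        refine Finset.mem_erase.mpr ⟨?_, Finset.mem_image_of_mem _ hB⟩
        intro h
        have : x ∈ B ∩ G.verts := Finset.mem_inter.mpr ⟨hxB, hx⟩
        simp [h] at this
      exact Finset.mem_sup.mpr ⟨_, hmem, Finset.mem_inter.mpr ⟨hxB, hx⟩⟩
  · intro e he B hB hsub'
    obtain ⟨B1, hB1, rfl⟩ := Finset.mem_image.mp (Finset.mem_of_mem_erase hB)
    exact hD.2.2.2.2 e (hsub he) B1 hB1 (hsub'.trans Finset.inter_subset_left)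

end Aux

namespace Aux
variable {V : Type} [DecidableEq V]

lemma ext_colorings {k} {G H : EGraph V}
    (hII : ∀ C, EGraph.IsColoring k G C ↔ EGraph.IsColoring k H C)
    (F : EGraph V) (D : Finset (Finset V))
    (hD : EGraph.IsColoring k (G ∪ F) D) : EGraph.IsColoring k (H ∪ F) D := by
  have hres := restrict (G := G) Finset.subset_union_left hD
  have hresH := (hII _).mp hres
  have hvGH : G.verts = H.verts := by
    rw [← hres.2.2.2.1, hresH.2.2.2.1]
  refine ⟨hD.1, hD.2.1, hD.2.2.1, ?_, ?_⟩
  · rw [hD.2.2.2.1, verts_union, verts_union, hvGH]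
  · intro e he B hB hsub
    rcases Finset.mem_union.mp he with heH | heF
    · have hev : e.1 ⊆ G.verts := hvGH ▸ edge_subset_verts heH
      have hmem : B ∩ G.verts ∈ (D.image (· ∩ G.verts)).erase ∅ := by
        refine Finset.mem_erase.mpr ⟨?_, Finset.mem_image_of_mem _ hB⟩
        intro h0
        obtain ⟨x, hx⟩ := Finset.card_pos.mp (by rw [e.2]; norm_num)
        have : x ∈ B ∩ G.verts := Finset.mem_inter.mpr ⟨hsub hx, hev hx⟩
        simp [h0] at this
      exact hresH.2.2.2.2 e heH _ hmem
        (fun x hx => Finset.mem_inter.mpr ⟨hsub hx, hev hx⟩)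
    · exact hD.2.2.2.2 e (Finset.mem_union_right _ heF) B hB hsub

lemma color_one {G : EGraph V} {C} (hC : EGraph.IsColoring 1 G C) : G = ∅ := by
  rcases Finset.eq_empty_or_nonempty G with rfl | ⟨e, he⟩
  · rfl
  exfalso
  have hev : e.1 ⊆ G.verts := edge_subset_verts he
  obtain ⟨x, hx⟩ := Finset.card_pos.mp (by rw [e.2]; norm_num)
  obtain ⟨B, hB, hxB⟩ := mem_block_of_mem_verts hC (hev hx)
  have hCB : C = {B} := by
    apply Finset.eq_singleton_iff_unique_mem.mpr
    exact ⟨hB, fun b hb => Finset.card_le_one.mp hC.1 b hb B hB⟩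
  have hBv : B = G.verts := by
    have := hC.2.2.2.1
    rwa [hCB, Finset.sup_singleton, id] at this
  exact hC.2.2.2.2 e he B hB (hBv ▸ hev)

end Aux

namespace Aux
variable {V : Type} [DecidableEq V]

lemma core {k : ℕ} (hk2 : 2 ≤ k) {G H : EGraph V}
    (hyp : ∀ F : EGraph V,
      ((∃ C, EGraph.IsColoring k (G ∪ F) C) ↔ (∃ C, EGraph.IsColoring k (H ∪ F) C)))
    {C} (hC : EGraph.IsColoring k G C) {e : {e : Finset V // e.card = 2}} (he : e ∈ H)
    {U : Finset V} (hUcard : U.card = k)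
    (hUG : ∀ x ∈ U, x ∉ G.verts) (hUH : ∀ x ∈ U, x ∉ H.verts)
    (ι : {B // B ∈ C} ↪ {u // u ∈ U})
    {t₀ : V} (ht₀ : t₀ ∈ U)
    (hsame : ∀ x ∈ e.1, ∀ B, ∀ hB : B ∈ C, x ∈ B → ((ι ⟨B, hB⟩ : {u // u ∈ U}) : V) = t₀) :
    False := by
  classical
  set W : Finset V := G.verts with hW
  set S : Finset V := e.1 \ W with hS
  -- basic facts
  have heH : e.1 ⊆ H.verts := edge_subset_verts he
  have hSU : ∀ x ∈ e.1, x ∉ U := fun x hx hxU => hUH x hxU (heH hx)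
  have hWU : ∀ x ∈ W, x ∉ U := fun x hx hxU => hUG x hxU hx
  -- the gadget
  set F : EGraph V :=
    pairsE U U ∪ C.attach.biUnion (fun B => pairsE B.1 (U.erase (ι B).1)) ∪
      pairsE S (U.erase t₀) with hF
  have hFe : ∀ ed ∈ F, (ed : {e : Finset V // e.card = 2}).1 ⊆ W ∪ U ∪ S := by
    intro ed hed
    rcases Finset.mem_union.mp hed with hed | hed
    · rcases Finset.mem_union.mp hed with hed | hed
      · obtain ⟨a, ha, b, hb, -, hab⟩ := mem_pairsE.mp hed
        rw [hab]; intro z hz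
        rcases Finset.mem_insert.mp hz with rfl | hz
        · exact Finset.mem_union_left _ (Finset.mem_union_right _ ha)
        · rw [Finset.mem_singleton.mp hz]
          exact Finset.mem_union_left _ (Finset.mem_union_right _ hb)
      · obtain ⟨B, -, hed⟩ := Finset.mem_biUnion.mp hed
        obtain ⟨a, ha, b, hb, -, hab⟩ := mem_pairsE.mp hed
        rw [hab]; intro z hz
        rcases Finset.mem_insert.mp hz with rfl | hz
        · exact Finset.mem_union_left _
            (Finset.mem_union_left _ (block_subset_verts hC B.2 ha))
        · rw [Finset.mem_singleton.mp hz]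
          exact Finset.mem_union_left _
            (Finset.mem_union_right _ (Finset.mem_of_mem_erase hb))
    · obtain ⟨a, ha, b, hb, -, hab⟩ := mem_pairsE.mp hed
      rw [hab]; intro z hz
      rcases Finset.mem_insert.mp hz with rfl | hz
      · exact Finset.mem_union_right _ ha
      · rw [Finset.mem_singleton.mp hz]
        exact Finset.mem_union_left _ (Finset.mem_union_right _ (Finset.mem_of_mem_erase hb))
  -- U is included in verts F
  have hUF : ∀ u ∈ U, u ∈ EGraph.verts F := by
    intro u hu
    obtain ⟨u', hu', hne⟩ := Finset.exists_mem_ne (s := U) (by omega) u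
    have : (⟨{u', u}, Finset.card_pair hne⟩ : {e : Finset V // e.card = 2}) ∈ F :=
      Finset.mem_union_left _ (Finset.mem_union_left _ (pairsE_intro hu' hu hne))
    exact edge_subset_verts this (by simp)
  -- S is included in verts F
  have hSF : ∀ x ∈ S, x ∈ EGraph.verts F := by
    intro x hx
    have hxe : x ∈ e.1 := (Finset.mem_sdiff.mp hx).1
    have : (U.erase t₀).Nonempty := by
      apply Finset.card_pos.mp
      rw [Finset.card_erase_of_mem ht₀, hUcard]; omega
    obtain ⟨u, hu⟩ := this
    have hxu : x ≠ u := fun h =>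
      hSU x hxe (h ▸ Finset.mem_of_mem_erase hu)
    have : (⟨{x, u}, Finset.card_pair hxu⟩ : {e : Finset V // e.card = 2}) ∈ F :=
      Finset.mem_union_right _ (pairsE_intro hx hu hxu)
    exact edge_subset_verts this (by simp)
  -- vertex set of G ∪ F
  have hvGF : (G ∪ F).verts = W ∪ U ∪ S := by
    apply Finset.Subset.antisymm
    · rw [verts_union]
      apply Finset.union_subset
      · exact fun x hx => Finset.mem_union_left _ (Finset.mem_union_left _ hx)
      · exact verts_subset hFe
    · apply Finset.union_subset
      · apply Finset.union_subset
        · exact fun x hx => (verts_union G F) ▸ Finset.mem_union_left _ hx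
        · exact fun u hu => (verts_union G F) ▸ Finset.mem_union_right _ (hUF u hu)
      · exact fun x hx => (verts_union G F) ▸ Finset.mem_union_right _ (hSF x hx)
  -- the canonical coloring function
  set f : V → V := fun x =>
    if x ∈ U then x else if h : ∃ B ∈ C, x ∈ B then (ι ⟨h.choose, h.choose_spec.1⟩ : V)
    else t₀ with hf
  have hfU : ∀ u ∈ U, f u = u := fun u hu => by simp [hf, hu]
  have hfB : ∀ {x B} (hB : B ∈ C), x ∈ B → f x = (ι ⟨B, hB⟩ : V) := by
    intro x B hB hxB
    have hxW : x ∈ W := block_subset_verts hC hB hxB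
    have hxU : x ∉ U := hWU x hxW
    have hex : ∃ B ∈ C, x ∈ B := ⟨B, hB, hxB⟩
    simp only [hf, if_neg hxU, dif_pos hex]
    have hbe : (⟨hex.choose, hex.choose_spec.1⟩ : {B // B ∈ C}) = ⟨B, hB⟩ :=
      Subtype.ext (block_unique hC hex.choose_spec.1 hB hex.choose_spec.2 hxB)
    rw [hbe]
  have hfS : ∀ {x}, x ∉ U → x ∉ W → f x = t₀ := by
    intro x hxU hxW
    have hex : ¬ ∃ B ∈ C, x ∈ B := by
      rintro ⟨B, hB, hxB⟩
      exact hxW (block_subset_verts hC hB hxB)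
    simp [hf, hxU, hex]
  have hfmemU : ∀ x ∈ W ∪ U ∪ S, f x ∈ U := by
    intro x hx
    by_cases hxU : x ∈ U
    · rw [hfU x hxU]; exact hxU
    by_cases hxW : x ∈ W
    · obtain ⟨B, hB, hxB⟩ := mem_block_of_mem_verts hC hxW
      rw [hfB hB hxB]; exact (ι ⟨B, hB⟩).2
    · rw [hfS hxU hxW]; exact ht₀
  -- the coloring of G ∪ F
  set D : Finset (Finset V) :=
    U.attach.image fun u => (W ∪ U ∪ S).filter fun z => f z = u.1 with hD
  have hDcol : EGraph.IsColoring k (G ∪ F) D := by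
    refine ⟨?_, ?_, ?_, ?_, ?_⟩
    · calc D.card ≤ U.attach.card := Finset.card_image_le
      _ = k := by rw [Finset.card_attach, hUcard]
    · rintro B hB
      obtain ⟨u, -, rfl⟩ := Finset.mem_image.mp hB
      exact ⟨u.1, Finset.mem_filter.mpr
        ⟨Finset.mem_union_left _ (Finset.mem_union_right _ u.2), hfU u.1 u.2⟩⟩
    · intro B hB B' hB' hne
      obtain ⟨u, -, rfl⟩ := Finset.mem_image.mp hB
      obtain ⟨u', -, rfl⟩ := Finset.mem_image.mp hB'
      refine Finset.disjoint_left.mpr fun {z} hz hz' => hne ?_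
      have h1 := (Finset.mem_filter.mp hz).2
      have h2 := (Finset.mem_filter.mp hz').2
      rw [← h1, h2]
    · apply Finset.Subset.antisymm
      · rw [← Finset.le_iff_subset]
        apply Finset.sup_le
        intro B hB
        obtain ⟨u, -, rfl⟩ := Finset.mem_image.mp hB
        rw [hvGF]
        exact Finset.le_iff_subset.mpr (Finset.filter_subset _ _)
      · rw [hvGF]
        intro z hz
        refine Finset.mem_sup.mpr ⟨(W ∪ U ∪ S).filter (fun y => f y = f z), ?_, ?_⟩
        · exact Finset.mem_image.mpr ⟨⟨f z, hfmemU z hz⟩, Finset.mem_attach _ _, rfl⟩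
        · exact Finset.mem_filter.mpr ⟨hz, rfl⟩
    · -- no monochromatic edges
      intro ed hed B hB hsub
      obtain ⟨u, -, rfl⟩ := Finset.mem_image.mp hB
      -- find endpoints with distinct f-values
      have key : ∃ a b, ed.1 = {a, b} ∧ f a ≠ f b := by
        rcases Finset.mem_union.mp hed with hed | hed
        · -- edge of G
          obtain ⟨a, b, hab, hab2⟩ := Finset.card_eq_two.mp ed.2
          have haW : a ∈ W := edge_subset_verts hed (by rw [hab2]; simp)
          have hbW : b ∈ W := edge_subset_verts hed (by rw [hab2]; simp)
          obtain ⟨Ba, hBa, haBa⟩ := mem_block_of_mem_verts hC haW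
          obtain ⟨Bb, hBb, hbBb⟩ := mem_block_of_mem_verts hC hbW
          have hBne : Ba ≠ Bb := by
            rintro rfl
            refine hC.2.2.2.2 ed hed Ba hBa ?_
            rw [hab2]
            intro z hz
            rcases Finset.mem_insert.mp hz with rfl | hz
            · exact haBa
            · rw [Finset.mem_singleton.mp hz]; exact hbBb
          refine ⟨a, b, hab2, ?_⟩
          rw [hfB hBa haBa, hfB hBb hbBb]
          intro hval
          exact hBne (congrArg Subtype.val (ι.injective (Subtype.ext hval)))
        rcases Finset.mem_union.mp hed with hed | hed
        · rcases Finset.mem_union.mp hed with hed | hed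
          · -- clique edge
            obtain ⟨a, ha, b, hb, hne', hab2⟩ := mem_pairsE.mp hed
            exact ⟨a, b, hab2, by rw [hfU a ha, hfU b hb]; exact hne'⟩
          · -- cross edge
            obtain ⟨B', -, hed⟩ := Finset.mem_biUnion.mp hed
            obtain ⟨a, ha, b, hb, -, hab2⟩ := mem_pairsE.mp hed
            refine ⟨a, b, hab2, ?_⟩
            rw [hfB B'.2 ha, hfU b (Finset.mem_of_mem_erase hb)]
            have : b ≠ (ι ⟨B'.1, B'.2⟩ : V) := (Finset.mem_erase.mp hb).1
            exact fun h => this (h.symm)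
        · -- forcing edge at S
          obtain ⟨a, ha, b, hb, -, hab2⟩ := mem_pairsE.mp hed
          have haS := Finset.mem_sdiff.mp ha
          refine ⟨a, b, hab2, ?_⟩
          rw [hfS (hSU a haS.1) haS.2, hfU b (Finset.mem_of_mem_erase hb)]
          exact fun h => (Finset.mem_erase.mp hb).1 h.symm
      obtain ⟨a, b, hab2, hfab⟩ := key
      have haX : a ∈ ed.1 := by rw [hab2]; simp
      have hbX : b ∈ ed.1 := by rw [hab2]; simp
      exact hfab (by
        rw [(Finset.mem_filter.mp (hsub haX)).2, (Finset.mem_filter.mp (hsub hbX)).2])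
  -- so H ∪ F has a coloring D'
  obtain ⟨D', hD'⟩ := (hyp F).mp ⟨D, hDcol⟩
  -- every vertex of H ∪ F lies in a class
  have hcls : ∀ z ∈ (H ∪ F).verts, ∃ X ∈ D', z ∈ X := by
    intro z hz
    rw [← hD'.2.2.2.1] at hz
    simpa using Finset.mem_sup.mp hz
  have hUv : ∀ u ∈ U, u ∈ (H ∪ F).verts := by
    intro u hu
    rw [verts_union]
    exact Finset.mem_union_right _ (hUF u hu)
  -- for u ∈ U choose its class
  have hclsU : ∀ u : {u // u ∈ U}, ∃ X ∈ D', u.1 ∈ X :=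
    fun u => hcls u.1 (hUv u.1 u.2)
  set g : {u // u ∈ U} → Finset V := fun u => (hclsU u).choose with hg
  have hgD : ∀ u, g u ∈ D' := fun u => (hclsU u).choose_spec.1
  have hgmem : ∀ u, u.1 ∈ g u := fun u => (hclsU u).choose_spec.2
  -- distinct u's lie in distinct classes
  have hginj : Function.Injective g := by
    intro u u' hguu
    by_contra hne
    have hne' : u.1 ≠ u'.1 := fun h => hne (Subtype.ext h)
    have hedge : (⟨{u.1, u'.1}, Finset.card_pair hne'⟩ :
        {e : Finset V // e.card = 2}) ∈ H ∪ F :=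
      Finset.mem_union_right _ (Finset.mem_union_left _
        (Finset.mem_union_left _ (pairsE_intro u.2 u'.2 hne')))
    refine hD'.2.2.2.2 _ hedge (g u) (hgD u) ?_
    intro z hz
    rcases Finset.mem_insert.mp hz with rfl | hz
    · exact hgmem u
    · rw [Finset.mem_singleton.mp hz, hguu]; exact hgmem u'
  -- every class contains some u ∈ U
  have hall : ∀ X ∈ D', ∃ u : {u // u ∈ U}, X = g u := by
    have hTsub : Finset.univ.image g ⊆ D' := by
      intro X hX
      obtain ⟨u, -, rfl⟩ := Finset.mem_image.mp hX
      exact hgD u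
    have hTcard : (Finset.univ.image g).card = k := by
      rw [Finset.card_image_of_injective _ hginj, Finset.card_univ,
        Fintype.card_coe, hUcard]
    have hEq : Finset.univ.image g = D' :=
      Finset.eq_of_subset_of_card_le hTsub (by rw [hTcard]; exact hD'.1)
    intro X hX
    rw [← hEq] at hX
    obtain ⟨u, -, rfl⟩ := Finset.mem_image.mp hX
    exact ⟨u, rfl⟩
  -- each endpoint of e lies in the class of t₀
  have hend : ∀ x ∈ e.1, ∃ X ∈ D', x ∈ X ∧ t₀ ∈ X := by
    intro x hx
    have hxv : x ∈ (H ∪ F).verts := by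
      rw [verts_union]
      exact Finset.mem_union_left _ (heH hx)
    obtain ⟨X, hX, hxX⟩ := hcls x hxv
    obtain ⟨u, rfl⟩ := hall X hX
    refine ⟨g u, hX, hxX, ?_⟩
    -- show u.1 = t₀
    suffices hu : u.1 = t₀ by rw [← hu]; exact hgmem u
    by_cases hxW : x ∈ W
    · obtain ⟨B, hB, hxB⟩ := mem_block_of_mem_verts hC hxW
      have ht : ((ι ⟨B, hB⟩ : {u // u ∈ U}) : V) = t₀ := hsame x hx B hB hxB
      by_contra hut
      have huer : u.1 ∈ U.erase (ι ⟨B, hB⟩).1 :=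
        Finset.mem_erase.mpr ⟨by rw [ht]; exact hut, u.2⟩
      have hxu : x ≠ u.1 := fun h => hWU x hxW (h ▸ u.2)
      have hedge : (⟨{x, u.1}, Finset.card_pair hxu⟩ :
          {e : Finset V // e.card = 2}) ∈ H ∪ F := by
        refine Finset.mem_union_right _ (Finset.mem_union_left _
          (Finset.mem_union_right _ (Finset.mem_biUnion.mpr
            ⟨⟨B, hB⟩, Finset.mem_attach _ _, pairsE_intro hxB huer hxu⟩)))
      refine hD'.2.2.2.2 _ hedge (g u) (hgD u) ?_
      intro z hz
      rcases Finset.mem_insert.mp hz with rfl | hz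
      · exact hxX
      · rw [Finset.mem_singleton.mp hz]; exact hgmem u
    · have hxS : x ∈ S := Finset.mem_sdiff.mpr ⟨hx, hxW⟩
      by_contra hut
      have huer : u.1 ∈ U.erase t₀ := Finset.mem_erase.mpr ⟨hut, u.2⟩
      have hxu : x ≠ u.1 := fun h => hSU x hx (h ▸ u.2)
      have hedge : (⟨{x, u.1}, Finset.card_pair hxu⟩ :
          {e : Finset V // e.card = 2}) ∈ H ∪ F :=
        Finset.mem_union_right _ (Finset.mem_union_right _ (pairsE_intro hxS huer hxu))
      refine hD'.2.2.2.2 _ hedge (g u) (hgD u) ?_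
      intro z hz
      rcases Finset.mem_insert.mp hz with rfl | hz
      · exact hxX
      · rw [Finset.mem_singleton.mp hz]; exact hgmem u
  -- both endpoints in the same class: contradiction
  obtain ⟨v, w, hvw, hevw⟩ := Finset.card_eq_two.mp e.2
  have hv : v ∈ e.1 := by rw [hevw]; simp
  have hw : w ∈ e.1 := by rw [hevw]; simp
  obtain ⟨Xv, hXv, hvXv, htXv⟩ := hend v hv
  obtain ⟨Xw, hXw, hwXw, htXw⟩ := hend w hw
  have hXeq : Xv = Xw := by
    by_contra hne
    exact Finset.disjoint_left.mp (hD'.2.2.1 _ hXv _ hXw hne) htXv htXw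
  refine hD'.2.2.2.2 e (Finset.mem_union_left _ he) Xv hXv ?_
  rw [hevw]
  intro z hz
  rcases Finset.mem_insert.mp hz with rfl | hz
  · exact hvXv
  · rw [Finset.mem_singleton.mp hz, hXeq]; exact hwXw

end Aux

namespace Aux
variable {V : Type} [DecidableEq V] [Infinite V]

lemma forceL {k : ℕ} (hk : 0 < k) {G H : EGraph V}
    (hyp : ∀ F : EGraph V,
      ((∃ C, EGraph.IsColoring k (G ∪ F) C) ↔ (∃ C, EGraph.IsColoring k (H ∪ F) C)))
    {C} (hC : EGraph.IsColoring k G C) :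
    ∀ e ∈ H, e.1 ⊆ G.verts ∧ ∀ B ∈ C, ¬ e.1 ⊆ B := by
  classical
  by_cases hk2 : 2 ≤ k
  · -- choose k fresh vertices
    obtain ⟨U, hUsub, hUcard⟩ :=
      (Set.Finite.infinite_compl (((G.verts ∪ H.verts) : Finset V) : Set V).toFinite).exists_subset_card_eq k
    have hUG : ∀ x ∈ U, x ∉ G.verts := by
      intro x hx hxG
      exact (hUsub hx) (by simp [hxG])
    have hUH : ∀ x ∈ U, x ∉ H.verts := by
      intro x hx hxH
      exact (hUsub hx) (by simp [hxH])
    obtain ⟨ι⟩ : Nonempty ({B // B ∈ C} ↪ {u // u ∈ U}) := by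
      apply Function.Embedding.nonempty_of_card_le
      rw [Fintype.card_coe, Fintype.card_coe, hUcard]
      exact hC.1
    intro e he
    have hW : e.1 ⊆ G.verts := by
      by_contra hns
      obtain ⟨v, w, hvw, hevw⟩ := Finset.card_eq_two.mp e.2
      have hv : v ∈ e.1 := by rw [hevw]; simp
      have hw : w ∈ e.1 := by rw [hevw]; simp
      by_cases hvW : v ∈ G.verts <;> by_cases hwW : w ∈ G.verts
      · refine hns ?_
        rw [hevw]
        intro z hz
        rcases Finset.mem_insert.mp hz with rfl | hz
        · exact hvW
        · rw [Finset.mem_singleton.mp hz]; exact hwW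
      · obtain ⟨Bv, hBv, hvBv⟩ := mem_block_of_mem_verts hC hvW
        refine core hk2 hyp hC he hUcard hUG hUH ι (ι ⟨Bv, hBv⟩).2 ?_
        intro x hx B hB hxB
        have hxW : x ∈ G.verts := block_subset_verts hC hB hxB
        have hxv : x = v := by
          rw [hevw] at hx
          rcases Finset.mem_insert.mp hx with rfl | hx
          · rfl
          · rw [Finset.mem_singleton.mp hx] at hxW; exact absurd hxW hwW
        subst hxv
        have : B = Bv := block_unique hC hB hBv hxB hvBv
        subst this
        rfl
      · obtain ⟨Bw, hBw, hwBw⟩ := mem_block_of_mem_verts hC hwW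
        refine core hk2 hyp hC he hUcard hUG hUH ι (ι ⟨Bw, hBw⟩).2 ?_
        intro x hx B hB hxB
        have hxW : x ∈ G.verts := block_subset_verts hC hB hxB
        have hxw : x = w := by
          rw [hevw] at hx
          rcases Finset.mem_insert.mp hx with rfl | hx
          · exact absurd hxW hvW
          · exact Finset.mem_singleton.mp hx
        subst hxw
        have : B = Bw := block_unique hC hB hBw hxB hwBw
        subst this
        rfl
      · have hUne : U.Nonempty := Finset.card_pos.mp (by omega)
        obtain ⟨t₀, ht₀⟩ := hUne
        refine core hk2 hyp hC he hUcard hUG hUH ι ht₀ ?_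
        intro x hx B hB hxB
        have hxW : x ∈ G.verts := block_subset_verts hC hB hxB
        rw [hevw] at hx
        rcases Finset.mem_insert.mp hx with rfl | hx
        · exact absurd hxW hvW
        · rw [Finset.mem_singleton.mp hx] at hxW; exact absurd hxW hwW
    refine ⟨hW, ?_⟩
    intro B hB hBe
    refine core hk2 hyp hC he hUcard hUG hUH ι (ι ⟨B, hB⟩).2 ?_
    intro x hx B' hB' hxB'
    have : B' = B := block_unique hC hB' hB hxB' (hBe hx)
    subst this
    rfl
  · -- k = 1
    have hk1 : k = 1 := by omega
    subst hk1
    obtain ⟨D, hD⟩ := (hyp ∅).mp ⟨C, by rwa [Finset.union_empty]⟩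
    rw [Finset.union_empty] at hD
    have hH : H = ∅ := color_one hD
    intro e he
    rw [hH] at he
    simp at he

lemma main_dir {k : ℕ} (hk : 0 < k) {G H : EGraph V}
    (hyp : ∀ F : EGraph V,
      ((∃ C, EGraph.IsColoring k (G ∪ F) C) ↔ (∃ C, EGraph.IsColoring k (H ∪ F) C)))
    {C} (hC : EGraph.IsColoring k G C) : EGraph.IsColoring k H C := by
  have hHe := forceL hk hyp hC
  obtain ⟨CH, hCH⟩ := (hyp ∅).mp ⟨C, by rwa [Finset.union_empty]⟩
  rw [Finset.union_empty] at hCH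
  have hGe := forceL hk (fun F => (hyp F).symm) hCH
  have hveq : G.verts = H.verts := Finset.Subset.antisymm
    (verts_subset fun e he => (hGe e he).1) (verts_subset fun e he => (hHe e he).1)
  exact ⟨hC.1, hC.2.1, hC.2.2.1, by rw [hC.2.2.2.1, hveq],
    fun e he B hB => (hHe e he).2 B hB⟩

end Aux


/-- For graphs `G`, `H`: strong equivalence with respect to `k`-colorability,
having the same proper `k`-colorings, and having the same proper `k`-colorings
after every common extension, are all equivalent. -/
theorem stmt17 {V : Type} [Countable V] [Infinite V] [DecidableEq V]
    (k : ℕ) (hk : 0 < k) (G H : EGraph V) :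
    ((∀ F : EGraph V,
        ((∃ C, EGraph.IsColoring k (G ∪ F) C) ↔
          (∃ C, EGraph.IsColoring k (H ∪ F) C))) ↔
      (∀ C, EGraph.IsColoring k G C ↔ EGraph.IsColoring k H C)) ∧
    ((∀ C, EGraph.IsColoring k G C ↔ EGraph.IsColoring k H C) ↔
      (∀ (F : EGraph V) (C),
        EGraph.IsColoring k (G ∪ F) C ↔ EGraph.IsColoring k (H ∪ F) C)) := by
  have h23 : (∀ C, EGraph.IsColoring k G C ↔ EGraph.IsColoring k H C) ↔
      (∀ (F : EGraph V) (C),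
        EGraph.IsColoring k (G ∪ F) C ↔ EGraph.IsColoring k (H ∪ F) C) := by
    constructor
    · intro h F C
      exact ⟨Aux.ext_colorings h F C, Aux.ext_colorings (fun C' => (h C').symm) F C⟩
    · intro h C
      have := h ∅ C
      rwa [Finset.union_empty, Finset.union_empty] at this
  refine ⟨⟨fun h1 C => ⟨Aux.main_dir hk h1, Aux.main_dir hk (fun F => (h1 F).symm)⟩,
    fun h2 F => exists_congr fun C => (h23.mp h2) F C⟩, h23⟩
end
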